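/- arXiv:1912.12984 — 10 statements merged into one kernel-verified Lean document; each statement's English description precedes it below -/
import Mathlib

section
/- Let A be a nearly simple algebra over a field F with unique non-trivial ideal I_A. Then I_A, regarded as a (non-unital) algebra, is simple: I_A · I_A ≠ {0} and the only two-sided ideals of the ring I_A are {0} and I_A. -/
/-- `A` is nearly simple with unique non-trivial two-sided ideal `I`: `I ≠ ⊥`, `I ≠ ⊤`,
every two-sided ideal other than `⊥` and `⊤` equals `I`, and `I * I ≠ 0`. -/
def IsNearlySimpleWith {A : Type*} [Ring A] (I : TwoSidedIdeal A) : Prop :=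
  I ≠ ⊥ ∧ I ≠ ⊤ ∧
    (∀ J : TwoSidedIdeal A, J ≠ ⊥ → J ≠ ⊤ → J = I) ∧
    (∃ x ∈ I, ∃ y ∈ I, x * y ≠ 0)

/-!
Any nonzero two-sided ideal of `A` inside `I` equals `I`. Applied to the ideal generated by `J`
this gives `I = AJA`, whence `I J I ⊆ J` yields `I I I ⊆ J`; applied to the ideal generated by
`I I` it gives `I = A I I A`, which brings this down first to `I I ⊆ J` and then to `I ⊆ J`.
-/

open Pointwise

namespace TwoSidedIdeal

variable {R M : Type*} [Ring R] [AddGroup M]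

lemma map_mem_of_mem_span {S : Set R} {X : AddSubgroup M} (f : R →+ M)
    (h : ∀ r s t, s ∈ S → f (r * s * t) ∈ X) {a : R} (ha : a ∈ span S) : f a ∈ X := by
  rw [mem_span_iff_mem_addSubgroup_closure] at ha
  refine (AddSubgroup.closure_le (X.comap f)).2 ?_ ha
  rintro - ⟨-, ⟨r, -, s, hs, rfl⟩, t, -, rfl⟩
  exact h r s t hs

lemma ne_bot_of_mem_of_ne_zero {I : TwoSidedIdeal R} {x : R} (hx : x ∈ I) (hx0 : x ≠ 0) :
    I ≠ ⊥ := by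
  rintro rfl
  exact hx0 ((mem_bot R).1 hx)

end TwoSidedIdeal

open TwoSidedIdeal

namespace IsNearlySimpleWith

variable {A : Type*} [Ring A] {I : TwoSidedIdeal A}

lemma eq_of_le_of_ne_bot (hA : IsNearlySimpleWith I) {K : TwoSidedIdeal A} (hKI : K ≤ I)
    (hK : K ≠ ⊥) : K = I :=
  hA.2.2.1 K hK fun h => hA.2.1 (top_le_iff.1 (h ▸ hKI))

lemma span_mul_self (hA : IsNearlySimpleWith I) : span ((I : Set A) * (I : Set A)) = I := by
  obtain ⟨x, hx, y, hy, hxy⟩ := hA.2.2.2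
  refine hA.eq_of_le_of_ne_bot (span_le.2 ?_) (ne_bot_of_mem_of_ne_zero
    (subset_span (Set.mul_mem_mul hx hy)) hxy)
  rintro - ⟨u, hu, v, -, rfl⟩
  exact I.mul_mem_right u v hu

lemma subset_of_mem_of_ne_zero (hA : IsNearlySimpleWith I) {J : AddSubgroup A}
    (hJI : (J : Set A) ⊆ I) (hJ : ∀ x ∈ I, ∀ y ∈ J, x * y ∈ J ∧ y * x ∈ J)
    {z : A} (hzJ : z ∈ J) (hz : z ≠ 0) : (I : Set A) ⊆ J := by
  have hspan : span (J : Set A) = I :=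
    hA.eq_of_le_of_ne_bot (span_le.2 hJI) (ne_bot_of_mem_of_ne_zero (subset_span hzJ) hz)
  have triple : ∀ u ∈ I, ∀ w ∈ I, ∀ v ∈ I, u * w * v ∈ J := by
    intro u hu w hw v hv
    refine map_mem_of_mem_span ((AddMonoidHom.mulRight v).comp (AddMonoidHom.mulLeft u))
      (fun r b t hb => ?_) (hspan ▸ hw)
    have hbtv : b * (t * v) ∈ J := (hJ _ (I.mul_mem_left t v hv) b hb).2
    simpa only [AddMonoidHom.comp_apply, AddMonoidHom.coe_mulLeft, AddMonoidHom.coe_mulRight,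
      mul_assoc] using (hJ _ (I.mul_mem_right u r hu) _ hbtv).1
  have pair : ∀ u ∈ I, ∀ v ∈ I, u * v ∈ J := by
    intro u hu v hv
    refine map_mem_of_mem_span (AddMonoidHom.mulRight v) (fun r s t hs => ?_)
      (hA.span_mul_self ▸ hu)
    obtain ⟨u', hu', v', hv', rfl⟩ := hs
    simpa only [AddMonoidHom.coe_mulRight, mul_assoc] using
      triple _ (I.mul_mem_left r u' hu') v' hv' _ (I.mul_mem_left t v hv)
  intro a ha
  refine map_mem_of_mem_span (AddMonoidHom.id A) (fun r s t hs => ?_) (hA.span_mul_self ▸ ha)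
  obtain ⟨u', hu', v', hv', rfl⟩ := hs
  simpa only [AddMonoidHom.id_apply, mul_assoc] using
    pair _ (I.mul_mem_left r u' hu') _ (I.mul_mem_right v' t hv')

end IsNearlySimpleWith

theorem IsNearlySimpleWith.ideal_simple_general
    (A : Type*) [Ring A]
    (I : TwoSidedIdeal A) (hA : IsNearlySimpleWith I) :
    (∃ x ∈ I, ∃ y ∈ I, x * y ≠ 0) ∧
    (∀ J : AddSubgroup A, (J : Set A) ⊆ (I : Set A) →
      (∀ x ∈ I, ∀ y ∈ J, x * y ∈ J ∧ y * x ∈ J) →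
      ((J : Set A) = {0} ∨ (J : Set A) = (I : Set A))) := by
  refine ⟨hA.2.2.2, fun J hJI hJ => ?_⟩
  rcases J.bot_or_exists_ne_zero with rfl | ⟨z, hzJ, hz⟩
  · exact Or.inl AddSubgroup.coe_bot
  · exact Or.inr (hJI.antisymm (hA.subset_of_mem_of_ne_zero hJI hJ hzJ hz))

/-- If `A` is a nearly simple algebra over a field `F` with unique non-trivial ideal `I`,
then `I` is a simple (non-unital) algebra: `I * I ≠ {0}` and the only two-sided ideals of
the ring `I` (additive subgroups `J ⊆ I` with `I·J ⊆ J` and `J·I ⊆ J`) are `{0}` and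
`I`. -/
theorem IsNearlySimpleWith.ideal_simple
    (F A : Type*) [Field F] [Ring A] [Algebra F A]
    (I : TwoSidedIdeal A) (hA : IsNearlySimpleWith I) :
    (∃ x ∈ I, ∃ y ∈ I, x * y ≠ 0) ∧
    (∀ J : AddSubgroup A, (J : Set A) ⊆ (I : Set A) →
      (∀ x ∈ I, ∀ y ∈ J, x * y ∈ J ∧ y * x ∈ J) →
      ((J : Set A) = {0} ∨ (J : Set A) = (I : Set A))) :=
  IsNearlySimpleWith.ideal_simple_general A I hA
end

section
/- Let A be a nearly simple algebra over a field F with unique non-trivial ideal I_A. Then I_A has no multiplicative identity element, and the center of I_A is zero: if z ∈ I_A satisfies z y = y z for all y ∈ I_A, then z = 0. -/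
section Helpers

variable {A : Type*} [Ring A]

/-- The principal two-sided ideal generated by a central element. -/
def centralPrincipal (w : A) (hw : ∀ a, w * a = a * w) : TwoSidedIdeal A :=
  TwoSidedIdeal.mk' {x | ∃ a, x = w * a}
    ⟨0, by simp⟩
    (fun ⟨a, ha⟩ ⟨b, hb⟩ => ⟨a + b, by simp [ha, hb, mul_add]⟩)
    (fun ⟨a, ha⟩ => ⟨-a, by simp [ha]⟩)
    (fun {x y} ⟨a, ha⟩ => ⟨x * a, by rw [ha, ← mul_assoc, ← hw x, mul_assoc]⟩)
    (fun {x y} ⟨a, ha⟩ => ⟨a * y, by rw [ha, mul_assoc]⟩)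

lemma mem_centralPrincipal (w : A) (hw : ∀ a, w * a = a * w) (x : A) :
    x ∈ centralPrincipal w hw ↔ ∃ a, x = w * a := TwoSidedIdeal.mem_mk' _ _ _ _ _ _ x

/-- The annihilator of a central element, as a two-sided ideal. -/
def centralAnn (w : A) (hw : ∀ a, w * a = a * w) : TwoSidedIdeal A :=
  TwoSidedIdeal.mk' {a | w * a = 0}
    (by simp)
    (fun ha hb => by simp [Set.mem_setOf_eq, mul_add] at *; simp [ha, hb])
    (fun ha => by simp [Set.mem_setOf_eq] at *; simp [ha])
    (fun {x y} hy => by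
      simp only [Set.mem_setOf_eq] at *
      rw [← mul_assoc, hw x, mul_assoc, hy, mul_zero])
    (fun {x y} hx => by
      simp only [Set.mem_setOf_eq] at *
      rw [← mul_assoc, hx, zero_mul])

lemma mem_centralAnn (w : A) (hw : ∀ a, w * a = a * w) (x : A) :
    x ∈ centralAnn w hw ↔ w * x = 0 := TwoSidedIdeal.mem_mk' _ _ _ _ _ _ x

/-- The left annihilator of a two-sided ideal. -/
def leftAnn (I : TwoSidedIdeal A) : TwoSidedIdeal A :=
  TwoSidedIdeal.mk' {a | ∀ y ∈ I, a * y = 0}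
    (fun y _ => by simp)
    (fun {a b} ha hb y hy => by rw [add_mul, ha y hy, hb y hy, add_zero])
    (fun {a} ha y hy => by rw [neg_mul, ha y hy, neg_zero])
    (fun {x a} ha y hy => by rw [mul_assoc, ha y hy, mul_zero])
    (fun {a x} ha y hy => by rw [mul_assoc, ha (x * y) (I.mul_mem_left x y hy)])

lemma mem_leftAnn (I : TwoSidedIdeal A) (x : A) :
    x ∈ leftAnn I ↔ ∀ y ∈ I, x * y = 0 := TwoSidedIdeal.mem_mk' _ _ _ _ _ _ x

end Helpers

/-- If `A` is a nearly simple algebra over a field `F` with unique non-trivial ideal `I`,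
then `I` has no multiplicative identity and the centre of `I` is zero. -/
theorem IsNearlySimpleWith.ideal_nonunital_and_center_zero
    (F A : Type*) [Field F] [Ring A] [Algebra F A]
    (I : TwoSidedIdeal A) (hA : IsNearlySimpleWith I) :
    (¬ ∃ e ∈ I, ∀ y ∈ I, e * y = y ∧ y * e = y) ∧
    (∀ z ∈ I, (∀ y ∈ I, z * y = y * z) → z = 0) := by
  obtain ⟨hIbot, hItop, huniq, x, hx, y0, hy0, hxy⟩ := hA
  constructor
  · -- no identity in I
    rintro ⟨e, heI, he⟩
    -- e is central
    have hec : ∀ a : A, e * a = a * e := by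
      intro a
      have h1 : (e * a) * e = e * a := (he (e * a) (I.mul_mem_right e a heI)).2
      have h2 : e * (a * e) = a * e := (he (a * e) (I.mul_mem_left a e heI)).1
      calc e * a = (e * a) * e := h1.symm
        _ = e * (a * e) := by rw [mul_assoc]
        _ = a * e := h2
    have hwc : ∀ a : A, (1 - e) * a = a * (1 - e) := by
      intro a
      rw [sub_mul, mul_sub, one_mul, mul_one, hec a]
    set J := centralPrincipal (1 - e) hwc with hJ
    have hJbot : J ≠ ⊥ := by
      intro h
      have : (1 - e : A) ∈ J := (mem_centralPrincipal _ _ _).2 ⟨1, by rw [mul_one]⟩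
      rw [h, TwoSidedIdeal.mem_bot, sub_eq_zero] at this
      exact hItop (I.eq_top (this ▸ heI))
    have hJtop : J ≠ ⊤ := by
      intro h
      have : (e : A) ∈ J := h ▸ TwoSidedIdeal.mem_top A
      obtain ⟨a, ha⟩ := (mem_centralPrincipal _ _ _).1 this
      have he0 : e = 0 := by
        have hee : e * e = e := (he e heI).1
        calc e = e * e := hee.symm
          _ = e * ((1 - e) * a) := by rw [← ha]
          _ = (e * (1 - e)) * a := by rw [mul_assoc]
          _ = 0 := by rw [mul_sub, mul_one, hee, sub_self, zero_mul]
      apply hIbot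
      ext w
      simp only [TwoSidedIdeal.mem_bot]
      constructor
      · intro hw
        have := (he w hw).1
        rw [he0, zero_mul] at this
        exact this.symm
      · rintro rfl; exact I.zero_mem
    have hJI : J = I := huniq J hJbot hJtop
    have h1e : (1 - e : A) ∈ I := by
      rw [← hJI]
      exact (mem_centralPrincipal _ _ _).2 ⟨1, by rw [mul_one]⟩
    have : (1 : A) ∈ I := by
      have := I.add_mem h1e heI
      rwa [sub_add_cancel] at this
    exact hItop (I.eq_top this)
  · -- center of I is zero
    intro z hz hcomm
    by_contra hz0
    -- left annihilator of I is ⊥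
    have hAnnI : leftAnn I ≠ I := by
      intro h
      exact hxy (((mem_leftAnn I x).1 (h.symm ▸ hx)) y0 hy0)
    have hAnnTop : leftAnn I ≠ ⊤ := by
      intro h
      exact hxy (((mem_leftAnn I x).1 (h ▸ TwoSidedIdeal.mem_top A)) y0 hy0)
    have hAnnBot : leftAnn I = ⊥ := by
      by_contra h
      exact hAnnI (huniq _ h hAnnTop)
    -- z is central in A
    have hzc : ∀ a : A, z * a = a * z := by
      intro a
      have hmem : z * a - a * z ∈ leftAnn I := by
        rw [mem_leftAnn]
        intro y hy
        have h1 : (z * a) * y = a * (y * z) := by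
          rw [mul_assoc, hcomm (a * y) (I.mul_mem_left a y hy), mul_assoc]
        have h2 : (a * z) * y = a * (y * z) := by
          rw [mul_assoc, hcomm y hy]
        rw [sub_mul, h1, h2, sub_self]
      rw [hAnnBot, TwoSidedIdeal.mem_bot, sub_eq_zero] at hmem
      exact hmem
    -- the principal ideal zA equals I
    set P := centralPrincipal z hzc with hP
    have hPbot : P ≠ ⊥ := by
      intro h
      have : z ∈ P := (mem_centralPrincipal _ _ _).2 ⟨1, by rw [mul_one]⟩
      rw [h, TwoSidedIdeal.mem_bot] at this
      exact hz0 this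
    have hPtop : P ≠ ⊤ := by
      intro h
      have : (1 : A) ∈ P := h ▸ TwoSidedIdeal.mem_top A
      obtain ⟨a, ha⟩ := (mem_centralPrincipal _ _ _).1 this
      have : (1 : A) ∈ I := ha ▸ I.mul_mem_right z a hz
      exact hItop (I.eq_top this)
    have hPI : P = I := huniq P hPbot hPtop
    -- annihilator of z
    set K := centralAnn z hzc with hK
    have hKtop : K ≠ ⊤ := by
      intro h
      have : (1 : A) ∈ K := h ▸ TwoSidedIdeal.mem_top A
      rw [mem_centralAnn, mul_one] at this
      exact hz0 this
    have hKI : K ≠ I := by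
      intro h
      obtain ⟨a, ha⟩ := (mem_centralPrincipal _ _ _).1 (hPI ▸ hx : x ∈ P)
      have hay : a * y0 ∈ K := h ▸ I.mul_mem_left a y0 hy0
      rw [mem_centralAnn] at hay
      exact hxy (by rw [ha, mul_assoc, hay])
    have hKbot : K = ⊥ := by
      by_contra h
      exact hKI (huniq _ h hKtop)
    -- the ideal z²A
    have hz2c : ∀ a : A, (z * z) * a = a * (z * z) := by
      intro a
      rw [mul_assoc, hzc a, ← mul_assoc, hzc a, mul_assoc]
    set Q := centralPrincipal (z * z) hz2c with hQ
    have hQbot : Q ≠ ⊥ := by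
      intro h
      have : z * z ∈ Q := (mem_centralPrincipal _ _ _).2 ⟨1, by rw [mul_one]⟩
      rw [h, TwoSidedIdeal.mem_bot] at this
      have : z ∈ K := (mem_centralAnn _ _ _).2 this
      rw [hKbot, TwoSidedIdeal.mem_bot] at this
      exact hz0 this
    have hQtop : Q ≠ ⊤ := by
      intro h
      have : (1 : A) ∈ Q := h ▸ TwoSidedIdeal.mem_top A
      obtain ⟨a, ha⟩ := (mem_centralPrincipal _ _ _).1 this
      have : (1 : A) ∈ I := by
        rw [ha, mul_assoc]
        exact I.mul_mem_right z (z * a) hz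
      exact hItop (I.eq_top this)
    have hQI : Q = I := huniq Q hQbot hQtop
    -- z = z² d for some d, hence z is a unit, contradiction
    obtain ⟨d, hd⟩ := (mem_centralPrincipal _ _ _).1 (hQI ▸ hz : z ∈ Q)
    have hmem : (1 - z * d : A) ∈ K := by
      rw [mem_centralAnn, mul_sub, mul_one, ← mul_assoc, ← hd, sub_self]
    rw [hKbot, TwoSidedIdeal.mem_bot, sub_eq_zero] at hmem
    have : (1 : A) ∈ I := hmem ▸ I.mul_mem_right z d hz
    exact hItop (I.eq_top this)
end

section
/- Let A be a nearly simple algebra over a field F with unique non-trivial ideal I_A. Then I_A is infinite-dimensional as an F-vector space. -/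
namespace NearlySimpleAux

variable {F A : Type*} [Field F] [Ring A] [Algebra F A] {I : TwoSidedIdeal A}

/-- The `F`-span of a two-sided ideal is closed under right multiplication. -/
lemma span_mul_right {v : A} (hv : v ∈ Submodule.span F (I : Set A)) (a : A) :
    v * a ∈ Submodule.span F (I : Set A) := by
  induction hv using Submodule.span_induction with
  | mem x hx => exact Submodule.subset_span (I.mul_mem_right x a hx)
  | zero => rw [zero_mul]; exact Submodule.zero_mem _
  | add x y hx hy ihx ihy => rw [add_mul]; exact Submodule.add_mem _ ihx ihy
  | smul c x hx ihx => rw [smul_mul_assoc]; exact Submodule.smul_mem _ c ihx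

/-- The right annihilator of `I` is trivial. -/
lemma eq_zero_of_right_ann (hA : IsNearlySimpleWith I) {b : A}
    (hb : ∀ x ∈ I, x * b = 0) : b = 0 := by
  obtain ⟨hbot, htop, huniq, x₀, hx₀, y₀, hy₀, hxy⟩ := hA
  by_contra hb0
  set J : TwoSidedIdeal A := TwoSidedIdeal.mk' {b : A | ∀ x ∈ I, x * b = 0}
    (fun x _ => mul_zero x)
    (by intro c d hc hd x hx; rw [mul_add, hc x hx, hd x hx, add_zero])
    (by intro c hc x hx; rw [mul_neg, hc x hx, neg_zero])
    (by intro c d hd x hx; rw [← mul_assoc]; exact hd _ (I.mul_mem_right x c hx))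
    (by intro c d hc x hx; rw [← mul_assoc, hc x hx, zero_mul]) with hJ
  have hJmem : ∀ z : A, z ∈ J ↔ ∀ x ∈ I, x * z = 0 := fun z => by
    rw [hJ, TwoSidedIdeal.mem_mk']; rfl
  have hJb : b ∈ J := (hJmem b).2 hb
  have hJbot : J ≠ ⊥ := by
    intro h; rw [h, TwoSidedIdeal.mem_bot] at hJb; exact hb0 hJb
  have hJtop : J ≠ ⊤ := by
    intro h
    have h1 : (1 : A) ∈ J := by rw [h]; exact TwoSidedIdeal.mem_top A
    have h2 := (hJmem 1).1 h1 x₀ hx₀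
    rw [mul_one] at h2
    exact hxy (by rw [h2, zero_mul])
  have hJI : J = I := huniq J hJbot hJtop
  have hy₀J : y₀ ∈ J := by rw [hJI]; exact hy₀
  exact hxy ((hJmem y₀).1 hy₀J x₀ hx₀)

/-- The left annihilator of `I` is trivial. -/
lemma eq_zero_of_left_ann (hA : IsNearlySimpleWith I) {b : A}
    (hb : ∀ x ∈ I, b * x = 0) : b = 0 := by
  obtain ⟨hbot, htop, huniq, x₀, hx₀, y₀, hy₀, hxy⟩ := hA
  by_contra hb0
  set J : TwoSidedIdeal A := TwoSidedIdeal.mk' {b : A | ∀ x ∈ I, b * x = 0}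
    (fun x _ => zero_mul x)
    (by intro c d hc hd x hx; rw [add_mul, hc x hx, hd x hx, add_zero])
    (by intro c hc x hx; rw [neg_mul, hc x hx, neg_zero])
    (by intro c d hd x hx; rw [mul_assoc, hd x hx, mul_zero])
    (by intro c d hc x hx; rw [mul_assoc]; exact hc _ (I.mul_mem_left d x hx)) with hJ
  have hJmem : ∀ z : A, z ∈ J ↔ ∀ x ∈ I, z * x = 0 := fun z => by
    rw [hJ, TwoSidedIdeal.mem_mk']; rfl
  have hJb : b ∈ J := (hJmem b).2 hb
  have hJbot : J ≠ ⊥ := by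
    intro h; rw [h, TwoSidedIdeal.mem_bot] at hJb; exact hb0 hJb
  have hJtop : J ≠ ⊤ := by
    intro h
    have h1 : (1 : A) ∈ J := by rw [h]; exact TwoSidedIdeal.mem_top A
    have h2 := (hJmem 1).1 h1 y₀ hy₀
    rw [one_mul] at h2
    exact hxy (by rw [h2, mul_zero])
  have hJI : J = I := huniq J hJbot hJtop
  have hx₀J : x₀ ∈ J := by rw [hJI]; exact hx₀
  exact hxy ((hJmem x₀).1 hx₀J y₀ hy₀)

/-- If `x ∈ I` is nonzero then `x A x ≠ 0`. -/
lemma not_forall_sandwich_zero (hA : IsNearlySimpleWith I) {x : A} (hxI : x ∈ I)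
    (hx0 : x ≠ 0) (hall : ∀ a : A, x * a * x = 0) : False := by
  obtain ⟨hbot, htop, huniq, x₀, hx₀, y₀, hy₀, hxy⟩ := id hA
  -- the two-sided ideal `N = {z | x A z = 0}`
  set N : TwoSidedIdeal A := TwoSidedIdeal.mk' {z : A | ∀ a : A, x * (a * z) = 0}
    (by intro a; rw [mul_zero, mul_zero])
    (by intro c d hc hd a; rw [mul_add, mul_add, hc a, hd a, add_zero])
    (by intro c hc a; rw [mul_neg, mul_neg, hc a, neg_zero])
    (by intro c d hd a; rw [← mul_assoc a c d]; exact hd (a * c))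
    (by intro c d hc a; rw [← mul_assoc a c d, ← mul_assoc x (a * c) d, hc a, zero_mul]) with hN
  have hNmem : ∀ z : A, z ∈ N ↔ ∀ a : A, x * (a * z) = 0 := fun z => by
    rw [hN, TwoSidedIdeal.mem_mk']; rfl
  have hxN : x ∈ N := (hNmem x).2 (fun a => by rw [← mul_assoc]; exact hall a)
  have hNbot : N ≠ ⊥ := by
    intro h; rw [h, TwoSidedIdeal.mem_bot] at hxN; exact hx0 hxN
  have hNtop : N ≠ ⊤ := by
    intro h
    have hax : ∀ z ∈ I, x * z = 0 := by
      intro z _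
      have hz : z ∈ N := by rw [h]; exact TwoSidedIdeal.mem_top A
      have := (hNmem z).1 hz 1
      rwa [one_mul] at this
    exact hx0 (eq_zero_of_left_ann hA hax)
  have hNI : N = I := huniq N hNbot hNtop
  have hstep : ∀ p ∈ I, ∀ a : A, x * (a * p) = 0 := by
    intro p hp a
    have hpN : p ∈ N := by rw [hNI]; exact hp
    exact (hNmem p).1 hpN a
  -- the two-sided ideal `M = {w | w A I = 0}`
  set M : TwoSidedIdeal A := TwoSidedIdeal.mk' {w : A | ∀ a : A, ∀ p ∈ I, w * (a * p) = 0}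
    (by intro a p _; rw [zero_mul])
    (by intro c d hc hd a p hp; rw [add_mul, hc a p hp, hd a p hp, add_zero])
    (by intro c hc a p hp; rw [neg_mul, hc a p hp, neg_zero])
    (by intro c d hd a p hp; rw [mul_assoc, hd a p hp, mul_zero])
    (by intro c d hc a p hp; rw [mul_assoc, ← mul_assoc d a p]; exact hc (d * a) p hp) with hM
  have hMmem : ∀ z : A, z ∈ M ↔ ∀ a : A, ∀ p ∈ I, z * (a * p) = 0 := fun z => by
    rw [hM, TwoSidedIdeal.mem_mk']; rfl
  have hxM : x ∈ M := (hMmem x).2 (fun a p hp => hstep p hp a)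
  have hMbot : M ≠ ⊥ := by
    intro h; rw [h, TwoSidedIdeal.mem_bot] at hxM; exact hx0 hxM
  have hMtop : M ≠ ⊤ := by
    intro h
    have h1 : (1 : A) ∈ M := by rw [h]; exact TwoSidedIdeal.mem_top A
    have h2 := (hMmem 1).1 h1 1 y₀ hy₀
    rw [one_mul, one_mul] at h2
    exact hxy (by rw [h2, mul_zero])
  have hMI : M = I := huniq M hMbot hMtop
  have hx₀M : x₀ ∈ M := by rw [hMI]; exact hx₀
  have := (hMmem x₀).1 hx₀M 1 y₀ hy₀
  rw [one_mul] at this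
  exact hxy this

end NearlySimpleAux

/-- If `A` is a nearly simple algebra over a field `F` with unique non-trivial ideal `I`,
then `I` is infinite-dimensional as an `F`-vector space (i.e. the `F`-subspace of `A`
spanned by `I`, which coincides with `I`, is not finite-dimensional). -/
theorem IsNearlySimpleWith.ideal_infinite_dimensional
    (F A : Type*) [Field F] [Ring A] [Algebra F A]
    (I : TwoSidedIdeal A) (hA : IsNearlySimpleWith I) :
    ¬ FiniteDimensional F (Submodule.span F (I : Set A)) := by
  intro hfin
  open NearlySimpleAux in
  obtain ⟨hbot, htop, huniq, x₀, hx₀, y₀, hy₀, hxy⟩ := id hA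
  set V : Submodule F A := Submodule.span F (I : Set A) with hVdef
  haveI : FiniteDimensional F V := hfin
  -- the right-multiplication "rank spaces"
  set Wr : A → Submodule F A := fun a => Submodule.map (LinearMap.mulRight F a) V with hWrdef
  have hWr_mem : ∀ a z : A, z ∈ Wr a ↔ ∃ v ∈ V, v * a = z := by
    intro a z
    rw [hWrdef]
    simp [Submodule.mem_map, LinearMap.mulRight_apply]
  have hWr_le_V : ∀ a : A, Wr a ≤ V := by
    intro a z hz
    obtain ⟨v, hv, rfl⟩ := (hWr_mem a z).1 hz
    exact span_mul_right hv a
  have hWr_fin : ∀ a : A, FiniteDimensional F (Wr a) := fun a =>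
    Submodule.finiteDimensional_of_le (hWr_le_V a)
  have hWr_ne_bot : ∀ x : A, x ∈ I → x ≠ 0 → Wr x ≠ ⊥ := by
    intro x hxI hx0
    have hz : ∃ z ∈ I, z * x ≠ 0 := by
      by_contra h
      push_neg at h
      exact hx0 (eq_zero_of_right_ann hA h)
    obtain ⟨z, hzI, hzx⟩ := hz
    rw [Submodule.ne_bot_iff]
    exact ⟨z * x, (hWr_mem x (z * x)).2 ⟨z, Submodule.subset_span hzI, rfl⟩, hzx⟩
  -- composition rule
  have hWr_comp : ∀ a b : A, Wr (a * b) = Submodule.map (LinearMap.mulRight F b) (Wr a) := by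
    intro a b
    rw [hWrdef]
    simp only [LinearMap.mulRight_mul, Submodule.map_comp]
  -- Key lemma: every nonzero "left-ideal-like" element set `{x ∈ I | x * u = 0}` contains a
  -- nonzero idempotent.
  have key : ∀ n : ℕ, ∀ u x : A, x ∈ I → x * u = 0 → x ≠ 0 →
      Module.finrank F (Wr x) < n →
      ∃ w : A, w ∈ I ∧ w * u = 0 ∧ w ≠ 0 ∧ w * w = w := by
    intro n
    induction n with
    | zero => intro u x _ _ _ h; exact absurd h (Nat.not_lt_zero _)
    | succ n ih =>
      intro u x hxI hxu hx0 hrank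
      by_cases hall : ∀ a : A, x * a * x = 0
      · exact (not_forall_sandwich_zero hA hxI hx0 hall).elim
      push_neg at hall
      obtain ⟨a, ha⟩ := hall
      have hxaxI : x * a * x ∈ I := I.mul_mem_left (x * a) x hxI
      have hxaxu : (x * a * x) * u = 0 := by rw [mul_assoc (x * a) x u, hxu, mul_zero]
      by_cases hlt : Module.finrank F (Wr (x * a * x)) < Module.finrank F (Wr x)
      · exact ih u (x * a * x) hxaxI hxaxu ha (by omega)
      push_neg at hlt
      -- the map `· * (a*x)` is a bijection of `Wr x`
      set y : A := a * x with hy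
      have hyI : y ∈ I := I.mul_mem_left a x hxI
      have hle1 : Wr (x * a * x) ≤ Wr x := by
        intro z hz
        obtain ⟨v, hv, rfl⟩ := (hWr_mem _ z).1 hz
        refine (hWr_mem x _).2 ⟨v * (x * a), span_mul_right hv (x * a), ?_⟩
        rw [mul_assoc v (x * a) x, mul_assoc x a x, ← mul_assoc v x (a * x),
          ← mul_assoc (v * x) a x, mul_assoc v x a]
      have hcomp1 : Wr (x * a * x) = Submodule.map (LinearMap.mulRight F y) (Wr x) := by
        rw [mul_assoc x a x, ← hy, hWr_comp x y]
      have heq : Submodule.map (LinearMap.mulRight F y) (Wr x) = Wr x := by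
        haveI := hWr_fin x
        refine Submodule.eq_of_le_of_finrank_le (by rw [← hcomp1]; exact hle1) ?_
        rw [← hcomp1]
        exact hlt
      have hpowmap : ∀ k : ℕ, Submodule.map (LinearMap.mulRight F (y ^ k)) (Wr x) = Wr x := by
        intro k
        induction k with
        | zero => rw [pow_zero, LinearMap.mulRight_one, Submodule.map_id]
        | succ k ihk =>
          rw [pow_succ, LinearMap.mulRight_mul, Submodule.map_comp, ihk, heq]
      have hyk : ∀ k : ℕ, y ^ k ≠ 0 := by
        intro k hk
        have h1 := hpowmap k
        rw [hk, LinearMap.mulRight_zero_eq_zero, Submodule.map_zero] at h1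
        exact hWr_ne_bot x hxI hx0 h1.symm
      -- Fitting-style stabilization of the chain `Wr (y^k)`
      have hdesc : ∀ k : ℕ, Wr (y ^ (k + 1)) ≤ Wr (y ^ k) := by
        intro k z hz
        obtain ⟨v, hv, rfl⟩ := (hWr_mem _ z).1 hz
        refine (hWr_mem _ _).2 ⟨v * y, span_mul_right hv y, ?_⟩
        rw [mul_assoc, ← pow_succ']
      have hchain : ∀ k j : ℕ, Wr (y ^ (k + j)) ≤ Wr (y ^ k) := by
        intro k j
        induction j with
        | zero => exact le_refl _
        | succ j ihj => exact le_trans (hdesc (k + j)) ihj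
      set f : ℕ → ℕ := fun k => Module.finrank F (Wr (y ^ (k + 1))) with hf
      obtain ⟨k₀, hk₀⟩ := Nat.sInf_mem (Set.range_nonempty f)
      set m : ℕ := k₀ + 1 with hm
      have hrank_ge : Module.finrank F (Wr (y ^ m)) ≤ Module.finrank F (Wr (y ^ (m + m))) := by
        have h2 : m + m = (k₀ + m) + 1 := by omega
        rw [h2]
        have : sInf (Set.range f) ≤ f (k₀ + m) := Nat.sInf_le ⟨k₀ + m, rfl⟩
        rw [← hk₀] at this
        exact this
      have hWW : Wr (y ^ (m + m)) = Wr (y ^ m) := by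
        haveI := hWr_fin (y ^ m)
        exact Submodule.eq_of_le_of_finrank_le (hchain m m) hrank_ge
      set t : A := y ^ m with ht
      have htI : t ∈ I := by rw [ht, hm, pow_succ]; exact I.mul_mem_left _ y hyI
      have htt : t * t = y ^ (m + m) := by rw [ht]; exact (pow_add y m m).symm
      have hWtt : Wr (t * t) = Wr t := by rw [htt, ht, hWW]
      have htu : t * u = 0 := by
        rw [ht, hm, pow_succ, mul_assoc, hy, mul_assoc, hxu, mul_zero, mul_zero]
      -- the bijection `ψ : Wr t → Wr t`, `w ↦ w * t`
      have hmapsto : ∀ z ∈ Wr t, z * t ∈ Wr t := by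
        intro z hz
        obtain ⟨v, hv, rfl⟩ := (hWr_mem _ z).1 hz
        rw [← hWtt]
        exact (hWr_mem _ _).2 ⟨v, hv, by rw [mul_assoc]⟩
      set ψ : Wr t →ₗ[F] Wr t :=
        LinearMap.restrict (LinearMap.mulRight F t)
          (p := Wr t) (q := Wr t) (fun z hz => hmapsto z hz) with hψ
      have hψ_apply : ∀ (z : Wr t), (ψ z : A) = (z : A) * t := by
        intro z; rw [hψ]; rfl
      have hcomp2 : Wr (t * t) = Submodule.map (LinearMap.mulRight F t) (Wr t) := hWr_comp t t
      have hψsurj : Function.Surjective ψ := by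
        rintro ⟨b, hb⟩
        have hb2 : b ∈ Submodule.map (LinearMap.mulRight F t) (Wr t) := by
          rw [← hcomp2, hWtt]; exact hb
        obtain ⟨w, hwW, hwb⟩ := hb2
        exact ⟨⟨w, hwW⟩, Subtype.ext (by rw [hψ_apply]; exact hwb)⟩
      haveI := hWr_fin t
      have hψinj : Function.Injective ψ := LinearMap.injective_iff_surjective.2 hψsurj
      -- find the idempotent
      have httW : t * t ∈ Wr t :=
        (hWr_mem _ _).2 ⟨t, Submodule.subset_span htI, rfl⟩
      obtain ⟨e1, he1⟩ := hψsurj ⟨t * t, httW⟩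
      obtain ⟨e2, he2⟩ := hψsurj e1
      set e : A := (e2 : A) with he
      have heW : e ∈ Wr t := e2.2
      have heuu : (e * t) * t = t * t := by
        have h1 : (ψ (ψ e2) : A) = (e * t) * t := by
          rw [hψ_apply, hψ_apply]
        rw [he2, he1] at h1
        exact h1.symm
      have heV : e ∈ V := hWr_le_V t heW
      obtain ⟨v, hvV, hvt⟩ := (hWr_mem t e).1 heW
      have heeW : e * e ∈ Wr t :=
        (hWr_mem _ _).2 ⟨e * v, span_mul_right heV v, by rw [mul_assoc, hvt]⟩
      have heidem : e * e = e := by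
        have h1 : ψ (ψ ⟨e * e, heeW⟩) = ψ (ψ e2) := by
          apply Subtype.ext
          rw [hψ_apply, hψ_apply, hψ_apply, hψ_apply]
          show ((e * e) * t) * t = (e * t) * t
          rw [heuu, mul_assoc e e t, mul_assoc e (e * t) t, heuu, ← mul_assoc, heuu]
        have h2 := hψinj (hψinj h1)
        have h3 : ((⟨e * e, heeW⟩ : Wr t) : A) = (e2 : A) := by rw [h2]
        exact h3
      have htt0 : t * t ≠ 0 := by rw [htt]; exact hyk (m + m)
      have he0 : e ≠ 0 := by
        intro h
        rw [h, zero_mul, zero_mul] at heuu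
        exact htt0 heuu.symm
      have heu : e * u = 0 := by
        rw [← hvt, mul_assoc, htu, mul_zero]
      have heI : e ∈ I := by rw [← hvt]; exact I.mul_mem_left v t htI
      exact ⟨e, heI, heu, he0, heidem⟩
  -- the obstruction submodules `K u = {z ∈ I | z * u = 0}`
  set IF : Submodule F A := Submodule.restrictScalars F (TwoSidedIdeal.asIdeal I) with hIF
  have hIF_mem : ∀ z : A, z ∈ IF ↔ z ∈ I := by
    intro z
    rw [hIF, Submodule.restrictScalars_mem, TwoSidedIdeal.mem_asIdeal]
  set Ksub : A → Submodule F A := fun u => IF ⊓ LinearMap.ker (LinearMap.mulRight F u)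
    with hKsub
  have hK_mem : ∀ u z : A, z ∈ Ksub u ↔ z ∈ I ∧ z * u = 0 := by
    intro u z
    rw [hKsub]
    simp only [Submodule.mem_inf, LinearMap.mem_ker, LinearMap.mulRight_apply, hIF_mem]
  have hK_le_V : ∀ u : A, Ksub u ≤ V := by
    intro u z hz
    exact Submodule.subset_span (((hK_mem u z).1 hz).1)
  -- main induction: enlarge idempotents until `u` is a right unit for `I`
  have main : ∀ n : ℕ, ∀ u : A, u ∈ I → u * u = u → Module.finrank F (Ksub u) < n → False := by
    intro n
    induction n with
    | zero => intro u _ _ h; exact absurd h (Nat.not_lt_zero _)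
    | succ n ih =>
      intro u huI huu hrank
      by_cases hKbot : Ksub u = ⊥
      · -- `u` is a right identity of `I`, hence a left identity of `A`, hence `1 ∈ I`
        have hright : ∀ z ∈ I, z * u = z := by
          intro z hz
          have hmem : z - z * u ∈ Ksub u := by
            refine (hK_mem u _).2 ⟨I.sub_mem hz (I.mul_mem_right z u hz), ?_⟩
            rw [sub_mul, mul_assoc, huu, sub_self]
          rw [hKbot, Submodule.mem_bot] at hmem
          have := sub_eq_zero.1 hmem
          exact this.symm
        have hleft : ∀ b : A, u * b = b := by
          intro b
          have h1 : ∀ z ∈ I, z * (u * b - b) = 0 := by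
            intro z hz
            rw [mul_sub, ← mul_assoc, hright z hz, sub_self]
          have h2 := eq_zero_of_right_ann hA h1
          exact sub_eq_zero.1 h2
        have hu1 : u = 1 := by have := hleft 1; rwa [mul_one] at this
        exact htop (I.eq_top (hu1 ▸ huI))
      · obtain ⟨x, hxK, hx0⟩ := (Submodule.ne_bot_iff _).1 hKbot
        obtain ⟨hxI, hxu⟩ := (hK_mem u x).1 hxK
        obtain ⟨w, hwI, hwu, hw0, hww⟩ :=
          key (Module.finrank F (Wr x) + 1) u x hxI hxu hx0 (Nat.lt_succ_self _)
        set u' : A := u + w - u * w with hu'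
        have hu'I : u' ∈ I := I.sub_mem (I.add_mem huI hwI) (I.mul_mem_left u w hwI)
        have h1 : u * u' = u := by
          rw [hu', mul_sub, mul_add, huu, ← mul_assoc, huu, add_sub_cancel_right]
        have h2 : w * u' = w := by
          rw [hu', mul_sub, mul_add, hwu, hww, ← mul_assoc, hwu, zero_mul, zero_add, sub_zero]
        have h3 : (u * w) * u' = u * w := by rw [mul_assoc, h2]
        have hu'2 : u' * u' = u' := by
          calc u' * u' = (u + w - u * w) * u' := by rw [← hu']
          _ = u * u' + w * u' - (u * w) * u' := by rw [sub_mul, add_mul]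
          _ = u + w - u * w := by rw [h1, h2, h3]
          _ = u' := hu'.symm
        have hu'u : u' * u = u := by
          rw [hu', sub_mul, add_mul, huu, hwu, mul_assoc, hwu, mul_zero, add_zero, sub_zero]
        have hle : Ksub u' ≤ Ksub u := by
          intro z hz
          obtain ⟨hzI, hzu'⟩ := (hK_mem u' z).1 hz
          refine (hK_mem u z).2 ⟨hzI, ?_⟩
          have : z * (u' * u) = 0 := by rw [← mul_assoc, hzu', zero_mul]
          rwa [hu'u] at this
        have hwK : w ∈ Ksub u := (hK_mem u w).2 ⟨hwI, hwu⟩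
        have hlt : Ksub u' < Ksub u := by
          refine lt_of_le_of_ne hle ?_
          intro h
          have hwK' : w ∈ Ksub u' := by rw [h]; exact hwK
          have := ((hK_mem u' w).1 hwK').2
          rw [h2] at this
          exact hw0 this
        haveI : FiniteDimensional F (Ksub u) := Submodule.finiteDimensional_of_le (hK_le_V u)
        have hfr : Module.finrank F (Ksub u') < Module.finrank F (Ksub u) :=
          Submodule.finrank_lt_finrank_of_lt hlt
        exact ih u' hu'I hu'2 (by omega)
  exact main (Module.finrank F (Ksub 0) + 1) 0 I.zero_mem (mul_zero 0) (Nat.lt_succ_self _)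
end

section
/- Let A be a nearly simple algebra over a field F. Then the center Z(A) = {z ∈ A : z a = a z for all a ∈ A} is a field; equivalently, every nonzero element of Z(A) is invertible in A (with inverse necessarily in Z(A)). -/
/-- A unital `F`-algebra `A` is nearly simple if it has exactly one two-sided ideal `I`
with `I ≠ ⊥` and `I ≠ ⊤`, and moreover `I * I ≠ 0`. -/
def IsNearlySimple (A : Type*) [Ring A] : Prop :=
  ∃ I : TwoSidedIdeal A, I ≠ ⊥ ∧ I ≠ ⊤ ∧
    (∀ J : TwoSidedIdeal A, J ≠ ⊥ → J ≠ ⊤ → J = I) ∧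
    (∃ x ∈ I, ∃ y ∈ I, x * y ≠ 0)

/-- If `A` is a nearly simple algebra over a field `F`, then the centre `Z(A)` is a
field: every nonzero central element has a (central) two-sided inverse. -/
theorem IsNearlySimple.center_isField
    (F A : Type*) [Field F] [Ring A] [Algebra F A]
    (hA : IsNearlySimple A) :
    ∀ z ∈ Subalgebra.center F A, z ≠ 0 →
      ∃ w ∈ Subalgebra.center F A, z * w = 1 ∧ w * z = 1 := by
  obtain ⟨I, hIbot, hItop, huniq, x, hxI, y, hyI, hxy⟩ := hA
  intro z hz hz0
  have hzc : ∀ a : A, z * a = a * z := by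
    intro a
    exact (Subalgebra.mem_center_iff.mp hz a).symm
  -- the two-sided ideal zA
  let P : TwoSidedIdeal A := TwoSidedIdeal.mk' {b | ∃ a, b = z * a}
    ⟨0, by simp⟩
    (fun {b c} ⟨a, ha⟩ ⟨a', ha'⟩ => ⟨a + a', by rw [ha, ha', mul_add]⟩)
    (fun {b} ⟨a, ha⟩ => ⟨-a, by rw [ha, mul_neg]⟩)
    (fun {r b} ⟨a, ha⟩ => ⟨r * a, by rw [ha, ← mul_assoc, ← hzc r, mul_assoc]⟩)
    (fun {b r} ⟨a, ha⟩ => ⟨a * r, by rw [ha, mul_assoc]⟩)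
  have hPmem : ∀ b : A, b ∈ P ↔ ∃ a, b = z * a := fun b =>
    TwoSidedIdeal.mem_mk' _ _ _ _ _ _ b
  -- key claim: 1 ∈ P
  have hone : (1 : A) ∈ P := by
    by_contra hone
    have hPtop : P ≠ ⊤ := fun h => hone (h ▸ TwoSidedIdeal.mem_top _)
    have hPbot : P ≠ ⊥ := by
      intro h
      have : z ∈ P := (hPmem z).mpr ⟨1, (mul_one z).symm⟩
      rw [h, TwoSidedIdeal.mem_bot] at this
      exact hz0 this
    have hPI : P = I := huniq P hPbot hPtop
    have hz2 : ∀ a : A, z * z * a = a * (z * z) := fun a => by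
      rw [mul_assoc, hzc a, ← mul_assoc, hzc a, mul_assoc]
    -- the ideal z²A
    let Q : TwoSidedIdeal A := TwoSidedIdeal.mk' {b | ∃ a, b = z * z * a}
      ⟨0, by simp⟩
      (fun {b c} ⟨a, ha⟩ ⟨a', ha'⟩ => ⟨a + a', by rw [ha, ha', mul_add]⟩)
      (fun {b} ⟨a, ha⟩ => ⟨-a, by rw [ha, mul_neg]⟩)
      (fun {r b} ⟨a, ha⟩ => ⟨r * a, by rw [ha, ← mul_assoc, ← hz2 r, mul_assoc]⟩)
      (fun {b r} ⟨a, ha⟩ => ⟨a * r, by rw [ha, mul_assoc, mul_assoc]⟩)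
    have hQmem : ∀ b : A, b ∈ Q ↔ ∃ a, b = z * z * a := fun b =>
      TwoSidedIdeal.mem_mk' _ _ _ _ _ _ b
    have hQbot : Q ≠ ⊥ := by
      intro h
      -- x, y ∈ I = P, so x = z a, y = z b, x*y = z² (a b) ∈ Q = ⊥
      obtain ⟨a, ha⟩ := (hPmem x).mp (hPI ▸ hxI)
      obtain ⟨b, hb⟩ := (hPmem y).mp (hPI ▸ hyI)
      have : x * y ∈ Q := (hQmem _).mpr ⟨a * b, by
        rw [ha, hb, mul_assoc, mul_assoc, ← mul_assoc a z b, ← hzc a, mul_assoc]⟩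
      rw [h, TwoSidedIdeal.mem_bot] at this
      exact hxy this
    have hQtop : Q ≠ ⊤ := by
      intro h
      obtain ⟨a, ha⟩ := (hQmem 1).mp (h ▸ TwoSidedIdeal.mem_top _)
      exact hone ((hPmem 1).mpr ⟨z * a, by rw [ha, mul_assoc]⟩)
    have hQI : Q = I := huniq Q hQbot hQtop
    -- z ∈ I = Q, so z = z² w
    have hzQ : z ∈ Q := by
      rw [hQI, ← hPI]
      exact (hPmem z).mpr ⟨1, (mul_one z).symm⟩
    obtain ⟨w, hw⟩ := (hQmem z).mp hzQ
    -- annihilator of z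
    let N : TwoSidedIdeal A := TwoSidedIdeal.mk' {b | z * b = 0}
      (by simp)
      (fun {b c} hb hc => by simp only [Set.mem_setOf_eq, mul_add] at *; rw [hb, hc, add_zero])
      (fun {b} hb => by simp only [Set.mem_setOf_eq, mul_neg] at *; rw [hb, neg_zero])
      (fun {r b} hb => by
        simp only [Set.mem_setOf_eq] at *
        rw [← mul_assoc, hzc r, mul_assoc, hb, mul_zero])
      (fun {b r} hb => by
        simp only [Set.mem_setOf_eq] at *
        rw [← mul_assoc, hb, zero_mul])
    have hNmem : ∀ b : A, b ∈ N ↔ z * b = 0 := fun b =>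
      TwoSidedIdeal.mem_mk' _ _ _ _ _ _ b
    have h1N : (1 : A) - z * w ∈ N := by
      rw [hNmem, mul_sub, mul_one, ← mul_assoc, hw.symm]
      exact sub_self z
    have hNbot : N ≠ ⊥ := by
      intro h
      have := h ▸ h1N
      rw [TwoSidedIdeal.mem_bot, sub_eq_zero] at this
      exact hone ((hPmem 1).mpr ⟨w, this⟩)
    have hNtop : N ≠ ⊤ := by
      intro h
      have : z * 1 = 0 := (hNmem 1).mp (h ▸ TwoSidedIdeal.mem_top _)
      rw [mul_one] at this
      exact hz0 this
    have hNI : N = I := huniq N hNbot hNtop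
    -- then 1 = (1 - zw) + zw ∈ I, contradiction
    have h1I : (1 : A) ∈ I := by
      have h1 : (1 : A) - z * w ∈ I := hNI ▸ h1N
      have h2 : z * w ∈ I := hPI ▸ (hPmem _).mpr ⟨w, rfl⟩
      have := I.add_mem h1 h2
      rwa [sub_add_cancel] at this
    exact hItop ((TwoSidedIdeal.one_mem_iff I).mp h1I)
  -- so z is invertible
  obtain ⟨w, hw⟩ := (hPmem 1).mp hone
  have hzw : z * w = 1 := hw.symm
  have hwz : w * z = 1 := by rw [← hzc w, hzw]
  refine ⟨w, Subalgebra.mem_center_iff.mpr fun a => ?_, hzw, hwz⟩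
  -- w central: a * w = w * a
  calc a * w = (w * z) * a * w := by rw [hwz, one_mul]
    _ = w * (a * z) * w := by rw [mul_assoc w z a, hzc a]
    _ = w * a * (z * w) := by rw [mul_assoc, mul_assoc, mul_assoc]
    _ = w * a := by rw [hzw, mul_one]
end

section
/- Let A be a non-unital associative algebra over a field F which is simple, i.e., A·A ≠ {0}, the only two-sided ideals of A are {0} and A, and A has no multiplicative identity element. Then the unitization A^♯ = F × A (with multiplication (λ, a)(μ, b) = (λμ, λb + μa + ab)) is a nearly simple algebra whose unique non-trivial two-sided ideal is the canonical copy {(0, a) : a ∈ A} of A. -/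
/-!
The elements of `A` sit in `F × A` as the kernel `I` of the scalar part `(λ, a) ↦ λ`, an ideal
of codimension one, hence maximal. Any other proper nonzero ideal `J` meets `A` in an ideal of
`A`. If that trace is all of `A`, then `I ≤ J`, so `J = I` by maximality. If it is zero, pick
`(λ, b) ∈ J` nonzero; then `λ ≠ 0`, and `(λ, b) · (0, a) = (0, λa + ba)` lies in
`J ∩ A = 0`, so `-λ⁻¹ b` is a left identity of `A`; symmetrically it is a right identity,
which `A` lacks.
-/

namespace Unitization

section Mul

variable {R A : Type*} [CommRing R] [NonUnitalRing A] [Module R A]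

theorem mul_inr_eq_inr (x : Unitization R A) (a : A) :
    x * (a : Unitization R A) = ↑(x.fst • a + x.snd * a) := by
  ext <;> simp

theorem inr_mul_eq_inr (x : Unitization R A) (a : A) :
    (a : Unitization R A) * x = ↑(x.fst • a + a * x.snd) := by
  ext <;> simp [add_comm]

end Mul

section CommRing

variable (R A : Type*) [CommRing R] [NonUnitalRing A] [Module R A]
  [IsScalarTower R A A] [SMulCommClass R A A]

def inrIdeal : TwoSidedIdeal (Unitization R A) :=
  TwoSidedIdeal.ker (fstHom R A)

variable {R A}

theorem mem_inrIdeal {x : Unitization R A} : x ∈ inrIdeal R A ↔ x.fst = 0 :=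
  TwoSidedIdeal.mem_ker _

theorem inr_mem_inrIdeal (a : A) : (a : Unitization R A) ∈ inrIdeal R A :=
  mem_inrIdeal.2 (fst_inr R a)

variable (R A) in
theorem coe_inrIdeal : (inrIdeal R A : Set (Unitization R A)) = Set.range inr := by
  ext x
  refine ⟨fun hx => ⟨x.snd, Unitization.ext (mem_inrIdeal.1 hx).symm rfl⟩, ?_⟩
  rintro ⟨a, rfl⟩
  exact inr_mem_inrIdeal a

theorem inrIdeal_ne_top [Nontrivial R] : inrIdeal R A ≠ ⊤ := fun h =>
  one_ne_zero (mem_inrIdeal.1 (h ▸ TwoSidedIdeal.mem_top (x := (1 : Unitization R A))))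

theorem inrIdeal_ne_bot [Nontrivial A] : inrIdeal R A ≠ ⊥ := fun h => by
  obtain ⟨a, ha⟩ := exists_ne (0 : A)
  have := h ▸ inr_mem_inrIdeal (R := R) a
  exact ha (inr_injective (R := R) ((TwoSidedIdeal.mem_bot _).1 this))

theorem inrIdeal_le_of_comap_eq_top {J : TwoSidedIdeal (Unitization R A)}
    (h : TwoSidedIdeal.comap (inrNonUnitalAlgHom R A) J = ⊤) : inrIdeal R A ≤ J := by
  intro x hx
  obtain ⟨a, rfl⟩ : x ∈ Set.range inr := coe_inrIdeal R A ▸ hx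
  exact (TwoSidedIdeal.mem_comap _).1 (h ▸ TwoSidedIdeal.mem_top (x := a))

end CommRing

section Field

variable {𝕜 A : Type*} [Field 𝕜] [NonUnitalRing A] [Module 𝕜 A]
  {J : TwoSidedIdeal (Unitization 𝕜 A)}

theorem eq_top_of_mem_of_fst_ne_zero {x : Unitization 𝕜 A} (hx : x ∈ J) (hx₀ : x.fst ≠ 0)
    (hsnd : (x.snd : Unitization 𝕜 A) ∈ J) : J = ⊤ := by
  have hinl : (inl x.fst : Unitization 𝕜 A) ∈ J := by
    rw [← add_sub_cancel_right (inl x.fst) (x.snd : Unitization 𝕜 A), inl_fst_add_inr_snd_eq]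
    exact J.sub_mem hx hsnd
  refine J.eq_top ?_
  rw [← inl_one, ← inv_mul_cancel₀ hx₀, inl_mul]
  exact J.mul_mem_left _ _ hinl

variable [IsScalarTower 𝕜 A A] [SMulCommClass 𝕜 A A]

theorem eq_inrIdeal_or_eq_top_of_inrIdeal_le (h : inrIdeal 𝕜 A ≤ J) :
    J = inrIdeal 𝕜 A ∨ J = ⊤ := by
  by_cases hJ : J ≤ inrIdeal 𝕜 A
  · exact .inl (le_antisymm hJ h)
  obtain ⟨x, hxJ, hxI⟩ := SetLike.not_le_iff_exists.1 hJ
  exact .inr (eq_top_of_mem_of_fst_ne_zero hxJ (mt mem_inrIdeal.2 hxI) (h (inr_mem_inrIdeal _)))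

theorem exists_mul_identity_of_comap_eq_bot (hJ : J ≠ ⊥)
    (h : TwoSidedIdeal.comap (inrNonUnitalAlgHom 𝕜 A) J = ⊥) :
    ∃ e : A, ∀ a : A, e * a = a ∧ a * e = a := by
  have eq_zero_of_inr_mem {a : A} (ha : (a : Unitization 𝕜 A) ∈ J) : a = 0 := by
    have : a ∈ TwoSidedIdeal.comap (inrNonUnitalAlgHom 𝕜 A) J :=
      (TwoSidedIdeal.mem_comap _).2 ha
    rwa [h, TwoSidedIdeal.mem_bot] at this
  obtain ⟨x, hxJ, hx⟩ : ∃ x ∈ J, x ≠ 0 := by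
    by_contra! hJ'
    exact hJ (eq_bot_iff.2 fun x hx => (TwoSidedIdeal.mem_bot _).2 (hJ' x hx))
  have hx₀ : x.fst ≠ 0 := by
    intro hx₀
    have hx_inr : x = x.snd := Unitization.ext (by simpa) rfl
    have hsnd : x.snd = 0 := eq_zero_of_inr_mem (hx_inr ▸ hxJ)
    exact hx (by rw [hx_inr, hsnd, inr_zero])
  have hleft (a : A) : x.snd * a = -(x.fst • a) := eq_neg_of_add_eq_zero_right <|
    eq_zero_of_inr_mem (mul_inr_eq_inr x a ▸ J.mul_mem_right _ _ hxJ)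
  have hright (a : A) : a * x.snd = -(x.fst • a) := eq_neg_of_add_eq_zero_right <|
    eq_zero_of_inr_mem (inr_mul_eq_inr x a ▸ J.mul_mem_left _ _ hxJ)
  refine ⟨-(x.fst⁻¹ • x.snd), fun a => ⟨?_, ?_⟩⟩
  · rw [neg_mul, smul_mul_assoc, hleft, smul_neg, neg_neg, smul_smul, inv_mul_cancel₀ hx₀,
      one_smul]
  · rw [mul_neg, mul_smul_comm, hright, smul_neg, neg_neg, smul_smul, inv_mul_cancel₀ hx₀,
      one_smul]

end Field

end Unitization

open Unitization

/-- If `A` is a simple non-unital algebra over a field `F` (i.e. `A·A ≠ {0}`, the only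
two-sided ideals of `A` are `{0}` and `A`, and `A` has no multiplicative identity), then
the unitization `A^♯ = F × A` is a nearly simple algebra whose unique non-trivial
two-sided ideal is the canonical copy `{(0, a) : a ∈ A}` of `A`. -/
theorem unitization_of_nonunital_simple_is_nearly_simple
    (F A : Type*) [Field F] [NonUnitalRing A] [Module F A]
    [SMulCommClass F A A] [IsScalarTower F A A]
    (hmul : ∃ x y : A, x * y ≠ 0)
    (hsimple : ∀ J : TwoSidedIdeal A, J = ⊥ ∨ J = ⊤)
    (hnounit : ¬ ∃ e : A, ∀ a : A, e * a = a ∧ a * e = a) :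
    ∃ I : TwoSidedIdeal (Unitization F A),
      (I : Set (Unitization F A)) = Set.range (Unitization.inr : A → Unitization F A) ∧
      I ≠ ⊥ ∧ I ≠ ⊤ ∧
      (∀ J : TwoSidedIdeal (Unitization F A), J ≠ ⊥ → J ≠ ⊤ → J = I) ∧
      (∃ x ∈ I, ∃ y ∈ I, x * y ≠ 0) := by
  obtain ⟨x, y, hxy⟩ := hmul
  have : Nontrivial A := ⟨⟨x, 0, left_ne_zero_of_mul hxy⟩⟩
  refine ⟨inrIdeal F A, coe_inrIdeal F A, inrIdeal_ne_bot, inrIdeal_ne_top, ?_,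
    x, inr_mem_inrIdeal x, y, inr_mem_inrIdeal y, ?_⟩
  · intro J hJ_bot hJ_top
    rcases hsimple (TwoSidedIdeal.comap (inrNonUnitalAlgHom F A) J) with h | h
    · exact absurd (exists_mul_identity_of_comap_eq_bot hJ_bot h) hnounit
    · exact (eq_inrIdeal_or_eq_top_of_inrIdeal_le (inrIdeal_le_of_comap_eq_top h)).resolve_right
        hJ_top
  · rw [← inr_mul, ← inr_zero F]
    exact inr_injective.ne hxy
end

section
/- Let V be a vector space over a field F of countably infinite dimension, let F(V) ⊆ End_F(V) be the ideal of finite-rank operators, and let D be a simple unital F-subalgebra of End_F(V) containing the identity operator. Then for A := D + F(V) = {d + f : d ∈ D, f ∈ F(V)} one has D ∩ F(V) = {0}, and F(V) is the unique two-sided ideal of A other than {0} and A; in particular A is a nearly simple algebra with I_A = F(V). -/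
open LinearMap

section Helpers

variable {F V : Type*} [Field F] [AddCommGroup V] [Module F V]

private lemma fr_zero : FiniteDimensional F (range (0 : Module.End F V)) := by
  rw [LinearMap.range_zero]; infer_instance

private lemma fr_add {f g : Module.End F V}
    (hf : FiniteDimensional F (range f)) (hg : FiniteDimensional F (range g)) :
    FiniteDimensional F (range (f + g)) := by
  have h : range (f + g) ≤ range f ⊔ range g := by
    rintro x ⟨w, rfl⟩
    exact Submodule.mem_sup.2 ⟨f w, ⟨w, rfl⟩, g w, ⟨w, rfl⟩, rfl⟩
  exact Submodule.finiteDimensional_of_le h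

private lemma fr_neg {f : Module.End F V}
    (hf : FiniteDimensional F (range f)) :
    FiniteDimensional F (range (-f)) := by
  rwa [LinearMap.range_neg]

private lemma fr_mul_left (x : Module.End F V) {y : Module.End F V}
    (hy : FiniteDimensional F (range y)) :
    FiniteDimensional F (range (x * y)) := by
  have : range (x * y) = (range y).map x := range_comp y x
  rw [this]
  infer_instance

private lemma fr_mul_right (x : Module.End F V) {y : Module.End F V}
    (hy : FiniteDimensional F (range y)) :
    FiniteDimensional F (range (y * x)) := by
  have : range (y * x) ≤ range y := range_comp_le_range x y
  exact Submodule.finiteDimensional_of_le this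

private lemma fr_smulRight (φ : Module.Dual F V) (v : V) :
    FiniteDimensional F (range (φ.smulRight v)) := by
  have h : range (φ.smulRight v) ≤ F ∙ v := by
    rintro x ⟨w, rfl⟩
    exact Submodule.mem_span_singleton.2 ⟨φ w, by simp⟩
  exact Submodule.finiteDimensional_of_le h

private lemma not_fr_one (hdim : Module.rank F V = Cardinal.aleph0) :
    ¬ FiniteDimensional F (range (1 : Module.End F V)) := by
  intro h
  have h1 : range (1 : Module.End F V) = ⊤ := LinearMap.range_id
  rw [h1] at h
  haveI : FiniteDimensional F V := Module.Finite.equiv (Submodule.topEquiv)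
  have := Module.rank_lt_aleph0 F V
  rw [hdim] at this
  exact lt_irrefl _ this

private lemma exists_dual {v : V} (hv : v ≠ 0) :
    ∃ ψ : Module.Dual F V, ψ v = 1 := by
  have := (Module.forall_dual_apply_eq_zero_iff F v).not.2 hv
  push_neg at this
  obtain ⟨φ, hφ⟩ := this
  exact ⟨(φ v)⁻¹ • φ, by simp [inv_mul_cancel₀ hφ]⟩

private lemma exists_sum_rankOne (f : Module.End F V)
    (hf : FiniteDimensional F (range f)) :
    ∃ (n : ℕ) (φ : Fin n → Module.Dual F V) (v : Fin n → V),
      f = ∑ i, (φ i).smulRight (v i) := by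
  let c := Module.finBasis F (range f)
  refine ⟨_, fun i => (c.coord i) ∘ₗ f.rangeRestrict, fun i => (c i : V), ?_⟩
  ext w
  have hsum := c.sum_repr (f.rangeRestrict w)
  have : f w = ((∑ i, c.repr (f.rangeRestrict w) i • c i : range f) : V) := by
    rw [hsum]; rfl
  rw [LinearMap.sum_apply, this]
  push_cast
  simp [Module.Basis.coord_apply]

end Helpers

set_option maxHeartbeats 1000000 in
set_option synthInstance.maxHeartbeats 400000 in
/-- Let `V` be a vector space of countably infinite dimension over a field `F`, let
`F(V) ⊆ End_F(V)` be the finite-rank operators, and let `D` be a simple unital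
`F`-subalgebra of `End_F(V)`. Then for `A := D + F(V)` one has `D ∩ F(V) = {0}`, and
`F(V)` is the unique two-sided ideal of `A` other than `{0}` and `A`; in particular `A`
is nearly simple with `I_A = F(V)`. -/
theorem simple_plus_finite_rank_nearly_simple
    (F V : Type*) [Field F] [AddCommGroup V] [Module F V]
    (hdim : Module.rank F V = Cardinal.aleph0)
    (D : Subalgebra F (Module.End F V))
    (hDsimple : ∀ J : TwoSidedIdeal D, J = ⊥ ∨ J = ⊤)
    (A : Subalgebra F (Module.End F V))
    (hA : (A : Set (Module.End F V)) =
      {x : Module.End F V | ∃ d ∈ D, ∃ f : Module.End F V,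
        FiniteDimensional F (LinearMap.range f) ∧ x = d + f}) :
    (∀ x ∈ D, FiniteDimensional F (LinearMap.range x) → x = 0) ∧
    ∃ I : TwoSidedIdeal A,
      (I : Set A) = {f : A | FiniteDimensional F (LinearMap.range (f : Module.End F V))} ∧
      I ≠ ⊥ ∧ I ≠ ⊤ ∧
      (∀ J : TwoSidedIdeal A, J ≠ ⊥ → J ≠ ⊤ → J = I) ∧
      (∃ x ∈ I, ∃ y ∈ I, x * y ≠ 0) := by
  classical
  have hAmem : ∀ x : Module.End F V, x ∈ A ↔ ∃ d ∈ D, ∃ f : Module.End F V,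
      FiniteDimensional F (LinearMap.range f) ∧ x = d + f := fun x => by
    conv_lhs => rw [← SetLike.mem_coe, hA]
    exact Iff.rfl
  -- finite-rank operators belong to A
  have hFA : ∀ f : Module.End F V, FiniteDimensional F (range f) → f ∈ A := fun f hf =>
    (hAmem f).2 ⟨0, zero_mem D, f, hf, (zero_add f).symm⟩
  -- D ⊆ A
  have hDA : ∀ d : Module.End F V, d ∈ D → d ∈ A := fun d hd =>
    (hAmem d).2 ⟨d, hd, 0, fr_zero, (add_zero d).symm⟩
  -- Part 1: D ∩ F(V) = 0
  have part1 : ∀ x ∈ D, FiniteDimensional F (LinearMap.range x) → x = 0 := by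
    intro x hxD hxfr
    by_contra hx0
    let K : TwoSidedIdeal D := TwoSidedIdeal.mk'
      {y : D | FiniteDimensional F (range (y : Module.End F V))}
      (by show FiniteDimensional F (range ((0 : D) : Module.End F V))
          rw [ZeroMemClass.coe_zero]; exact fr_zero)
      (fun {a b} ha hb => by
        simp only [Set.mem_setOf_eq, AddMemClass.coe_add] at *
        exact fr_add ha hb)
      (fun {a} ha => by
        simp only [Set.mem_setOf_eq, NegMemClass.coe_neg] at *
        exact fr_neg ha)
      (fun {a b} hb => by
        simp only [Set.mem_setOf_eq, MulMemClass.coe_mul] at *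
        exact fr_mul_left _ hb)
      (fun {a b} ha => by
        simp only [Set.mem_setOf_eq, MulMemClass.coe_mul] at *
        exact fr_mul_right _ ha)
    have hxK : (⟨x, hxD⟩ : D) ∈ K := by
      rw [TwoSidedIdeal.mem_mk']; exact hxfr
    rcases hDsimple K with h | h
    · rw [h, TwoSidedIdeal.mem_bot] at hxK
      exact hx0 (congrArg Subtype.val hxK)
    · have h1 : (1 : D) ∈ K := h ▸ TwoSidedIdeal.mem_top _
      rw [TwoSidedIdeal.mem_mk'] at h1
      exact not_fr_one hdim (by simpa using h1)
  refine ⟨part1, ?_⟩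
  -- the ideal of finite-rank operators in A
  let I : TwoSidedIdeal A := TwoSidedIdeal.mk'
    {f : A | FiniteDimensional F (range (f : Module.End F V))}
    (by show FiniteDimensional F (range ((0 : A) : Module.End F V))
        rw [ZeroMemClass.coe_zero]; exact fr_zero)
    (fun {a b} ha hb => by
      simp only [Set.mem_setOf_eq, AddMemClass.coe_add] at *
      exact fr_add ha hb)
    (fun {a} ha => by
      simp only [Set.mem_setOf_eq, NegMemClass.coe_neg] at *
      exact fr_neg ha)
    (fun {a b} hb => by
      simp only [Set.mem_setOf_eq, MulMemClass.coe_mul] at *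
      exact fr_mul_left _ hb)
    (fun {a b} ha => by
      simp only [Set.mem_setOf_eq, MulMemClass.coe_mul] at *
      exact fr_mul_right _ ha)
  have hImem : ∀ z : A, z ∈ I ↔ FiniteDimensional F (range (z : Module.End F V)) := by
    intro z; rw [TwoSidedIdeal.mem_mk']; rfl
  -- a nonzero idempotent finite-rank element
  have hV : Nontrivial V := rank_pos_iff_nontrivial.1 (by
    rw [hdim]; exact Cardinal.aleph0_pos)
  obtain ⟨v, hv⟩ := exists_ne (0 : V)
  obtain ⟨ψ, hψ⟩ := exists_dual (F := F) hv
  set e : Module.End F V := ψ.smulRight v with he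
  have hefr : FiniteDimensional F (range e) := fr_smulRight ψ v
  have hee : e * e = e := by
    ext w
    simp [he, Module.End.mul_apply, hψ, smul_smul]
  have he0 : e ≠ 0 := by
    intro h
    have : e v = 0 := by rw [h]; rfl
    rw [he] at this
    simp [hψ] at this
    exact hv this
  have heA : e ∈ A := hFA e hefr
  have heI : (⟨e, heA⟩ : A) ∈ I := (hImem _).2 hefr
  -- key: J contains all finite-rank elements if J ≠ ⊥
  have key : ∀ J : TwoSidedIdeal A, J ≠ ⊥ →
      ∀ (g : Module.End F V) (hg : FiniteDimensional F (range g)) (hgA : g ∈ A),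
        (⟨g, hgA⟩ : A) ∈ J := by
    intro J hJbot g hg hgA
    -- find a nonzero element of J
    have : ∃ x : A, x ∈ J ∧ (x : Module.End F V) ≠ 0 := by
      by_contra h
      push_neg at h
      apply hJbot
      refine TwoSidedIdeal.ext fun z => ⟨fun hz => ?_, fun hz => ?_⟩
      · rw [TwoSidedIdeal.mem_bot]
        exact Subtype.ext (h z hz)
      · rw [TwoSidedIdeal.mem_bot] at hz
        rw [hz]; exact TwoSidedIdeal.zero_mem J
    obtain ⟨x, hxJ, hx0⟩ := this
    obtain ⟨u, hu⟩ : ∃ u, (x : Module.End F V) u ≠ 0 := by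
      by_contra h
      push_neg at h
      exact hx0 (LinearMap.ext h)
    obtain ⟨ψ', hψ'⟩ := exists_dual (F := F) hu
    -- every rank-one operator is in J
    have rankone : ∀ (φ : Module.Dual F V) (w : V),
        (⟨φ.smulRight w, hFA _ (fr_smulRight φ w)⟩ : A) ∈ J := by
      intro φ w
      set a : Module.End F V := ψ'.smulRight w with ha
      set b : Module.End F V := φ.smulRight u with hb
      have haA : a ∈ A := hFA a (fr_smulRight ψ' w)
      have hbA : b ∈ A := hFA b (fr_smulRight φ u)
      have hprod : (⟨a, haA⟩ : A) * x * (⟨b, hbA⟩ : A) ∈ J :=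
        J.mul_mem_right _ _ (J.mul_mem_left _ _ hxJ)
      have : (⟨a, haA⟩ : A) * x * (⟨b, hbA⟩ : A)
          = (⟨φ.smulRight w, hFA _ (fr_smulRight φ w)⟩ : A) := by
        apply Subtype.ext
        rw [MulMemClass.coe_mul, MulMemClass.coe_mul]
        show a * (x : Module.End F V) * b = φ.smulRight w
        ext z
        simp [Module.End.mul_apply, hb, ha, hψ', smul_smul, mul_comm]
      rwa [this] at hprod
    -- decompose g into rank-one operators
    obtain ⟨n, φ, w, hgsum⟩ := exists_sum_rankOne g hg
    have hsA : ∀ i : Fin n, (φ i).smulRight (w i) ∈ A := fun i =>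
      hFA _ (fr_smulRight (φ i) (w i))
    have : (⟨g, hgA⟩ : A) = ∑ i, (⟨(φ i).smulRight (w i), hsA i⟩ : A) := by
      apply Subtype.ext
      show g = _
      rw [hgsum]
      exact (map_sum A.val (fun i => (⟨(φ i).smulRight (w i), hsA i⟩ : A)) Finset.univ).symm
    rw [this]
    exact sum_mem fun i _ => rankone (φ i) (w i)
  refine ⟨I, TwoSidedIdeal.coe_mk' _ _ _ _ _ _, ?_, ?_, ?_, ?_⟩
  · -- I ≠ ⊥
    intro h
    have := heI
    rw [h, TwoSidedIdeal.mem_bot] at this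
    exact he0 (congrArg Subtype.val this)
  · -- I ≠ ⊤
    intro h
    have h1 : (1 : A) ∈ I := h ▸ TwoSidedIdeal.mem_top _
    rw [hImem] at h1
    exact not_fr_one hdim (by simpa using h1)
  · -- uniqueness
    intro J hJbot hJtop
    refine TwoSidedIdeal.ext fun z => ⟨fun hz => ?_, fun hz => ?_⟩
    · -- J ⊆ I
      obtain ⟨d, hd, f, hf, hzdf⟩ := (hAmem (z : Module.End F V)).1 z.2
      have hfA : f ∈ A := hFA f hf
      have hfJ : (⟨f, hfA⟩ : A) ∈ J := key J hJbot f hf hfA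
      have hdA : d ∈ A := hDA d hd
      have hdJ : (⟨d, hdA⟩ : A) ∈ J := by
        have : (⟨d, hdA⟩ : A) = z - (⟨f, hfA⟩ : A) := by
          apply Subtype.ext
          show d = (z : Module.End F V) - f
          rw [hzdf, add_sub_cancel_right]
        rw [this]
        exact TwoSidedIdeal.sub_mem J hz hfJ
      -- the trace of J on D is an ideal of D
      let K : TwoSidedIdeal D := TwoSidedIdeal.mk'
        {y : D | (⟨(y : Module.End F V), hDA _ y.2⟩ : A) ∈ J}
        (by
          simp only [Set.mem_setOf_eq]
          have : (⟨((0 : D) : Module.End F V), hDA _ (0 : D).2⟩ : A) = 0 :=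
            Subtype.ext (by simp)
          rw [this]; exact TwoSidedIdeal.zero_mem J)
        (fun {a b} ha hb => by
          simp only [Set.mem_setOf_eq] at *
          have : (⟨((a + b : D) : Module.End F V), hDA _ (a + b).2⟩ : A)
              = ⟨a, hDA _ a.2⟩ + ⟨b, hDA _ b.2⟩ := Subtype.ext (by push_cast; ring_nf)
          rw [this]; exact TwoSidedIdeal.add_mem J ha hb)
        (fun {a} ha => by
          simp only [Set.mem_setOf_eq] at *
          have : (⟨((-a : D) : Module.End F V), hDA _ (-a).2⟩ : A)
              = -⟨a, hDA _ a.2⟩ := Subtype.ext (by push_cast; ring_nf)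
          rw [this]; exact TwoSidedIdeal.neg_mem J ha)
        (fun {a b} hb => by
          simp only [Set.mem_setOf_eq] at *
          have : (⟨((a * b : D) : Module.End F V), hDA _ (a * b).2⟩ : A)
              = ⟨a, hDA _ a.2⟩ * ⟨b, hDA _ b.2⟩ := Subtype.ext (by push_cast; ring_nf)
          rw [this]; exact J.mul_mem_left _ _ hb)
        (fun {a b} ha => by
          simp only [Set.mem_setOf_eq] at *
          have : (⟨((a * b : D) : Module.End F V), hDA _ (a * b).2⟩ : A)
              = ⟨a, hDA _ a.2⟩ * ⟨b, hDA _ b.2⟩ := Subtype.ext (by push_cast; ring_nf)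
          rw [this]; exact J.mul_mem_right _ _ ha)
      have hKbot : K = ⊥ := by
        rcases hDsimple K with h | h
        · exact h
        · exfalso
          have h1 : (1 : D) ∈ K := h ▸ TwoSidedIdeal.mem_top _
          rw [TwoSidedIdeal.mem_mk'] at h1
          have h1' : (1 : A) ∈ J := by
            have heq : (⟨((1 : D) : Module.End F V), hDA _ (1 : D).2⟩ : A) = 1 :=
              Subtype.ext (by push_cast; rfl)
            exact heq ▸ h1
          exact hJtop (TwoSidedIdeal.one_mem_iff J |>.1 h1')
      have hdK : (⟨d, hd⟩ : D) ∈ K := (TwoSidedIdeal.mem_mk' _ _ _ _ _ _ _).2 (by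
        show (⟨d, hDA _ hd⟩ : A) ∈ J
        convert hdJ)
      rw [hKbot, TwoSidedIdeal.mem_bot] at hdK
      have hd0 : d = 0 := congrArg Subtype.val hdK
      rw [hImem]
      rw [hzdf, hd0, zero_add]
      exact hf
    · -- I ⊆ J
      have hfr := (hImem z).1 hz
      have : (⟨(z : Module.End F V), z.2⟩ : A) = z := Subtype.ext rfl
      rw [← this]
      exact key J hJbot _ hfr z.2
  · exact ⟨⟨e, heA⟩, heI, ⟨e, heA⟩, heI, by
      intro h
      have : e * e = 0 := congrArg Subtype.val h
      rw [hee] at this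
      exact he0 this⟩
end

section
/- Let A and B be nearly simple algebras over a field F, with unique non-trivial ideals I_A and I_B, and assume that every two-sided ideal of A ⊗ B is admissible. Then the algebra (A/I_A) ⊗ B has exactly one two-sided ideal other than {0} and (A/I_A) ⊗ B, namely (A/I_A) ⊗ I_B (the span of elementary tensors c ⊗ y with c ∈ A/I_A, y ∈ I_B); in particular (A/I_A) ⊗ B is nearly simple. Symmetrically, A ⊗ (B/I_B) is nearly simple with unique non-trivial ideal I_A ⊗ (B/I_B). -/
open TensorProduct

def tmulSpan (F : Type*) {A B : Type*} [Field F] [Ring A] [Algebra F A] [Ring B]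
    [Algebra F B] (S : Set A) (T : Set B) : Submodule F (A ⊗[F] B) :=
  Submodule.span F {t : A ⊗[F] B | ∃ x ∈ S, ∃ y ∈ T, t = x ⊗ₜ[F] y}

def Admissible (F : Type*) {A B : Type*} [Field F] [Ring A] [Algebra F A] [Ring B]
    [Algebra F B] (IA : TwoSidedIdeal A) (IB : TwoSidedIdeal B)
    (J : TwoSidedIdeal (A ⊗[F] B)) : Prop :=
  J = ⊥ ∨ J = ⊤ ∨
  (J : Set (A ⊗[F] B)) = ↑(tmulSpan F (IA : Set A) (IB : Set B)) ∨
  (J : Set (A ⊗[F] B)) = ↑(tmulSpan F (IA : Set A) (Set.univ : Set B)) ∨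
  (J : Set (A ⊗[F] B)) = ↑(tmulSpan F (Set.univ : Set A) (IB : Set B)) ∨
  (J : Set (A ⊗[F] B)) =
    ↑(tmulSpan F (IA : Set A) (Set.univ : Set B) ⊔ tmulSpan F (Set.univ : Set A) (IB : Set B))

section

variable {F : Type*} [Field F]

theorem TensorProduct.tmul_ne_zero {M N : Type*} [AddCommGroup M] [Module F M] [AddCommGroup N]
    [Module F N] {m : M} {n : N} (hm : m ≠ 0) (hn : n ≠ 0) : m ⊗ₜ[F] n ≠ 0 := by
  obtain ⟨φ, hφ⟩ : ∃ φ : Module.Dual F M, φ m ≠ 0 := by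
    by_contra! h
    exact hm ((Module.forall_dual_apply_eq_zero_iff F m).mp h)
  intro h
  have : φ m • n = 0 := by
    simpa using congrArg (fun t => TensorProduct.lid F N (φ.rTensor N t)) h
  exact smul_ne_zero hφ hn this

theorem TwoSidedIdeal.exists_mem_ne_zero_of_ne_bot {R : Type*} [Ring R] {I : TwoSidedIdeal R}
    (h : I ≠ ⊥) : ∃ x ∈ I, x ≠ 0 := by
  by_contra! h'
  exact h (eq_bot_iff.mpr fun x hx => (TwoSidedIdeal.mem_bot _).mpr (h' x hx))

variable {A B : Type*} [Ring A] [Algebra F A] [Ring B] [Algebra F B]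

theorem tmul_notMem_tmulSpan_right (S : Set A) {N : Submodule F B} {a : A} {b : B}
    (ha : a ≠ 0) (hb : b ∉ N) : a ⊗ₜ[F] b ∉ tmulSpan F S N := by
  have hle : tmulSpan F S N ≤ LinearMap.ker (N.mkQ.lTensor A) := by
    refine Submodule.span_le.mpr ?_
    rintro _ ⟨x, -, y, hy, rfl⟩
    simp [(Submodule.Quotient.mk_eq_zero N).mpr hy]
  intro h
  have h' : a ⊗ₜ[F] (Submodule.Quotient.mk b : B ⧸ N) = 0 := by simpa using hle h
  exact TensorProduct.tmul_ne_zero ha ((Submodule.Quotient.mk_eq_zero N).not.mpr hb) h'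

theorem tmul_notMem_tmulSpan_left (T : Set B) {N : Submodule F A} {a : A} {b : B}
    (ha : a ∉ N) (hb : b ≠ 0) : a ⊗ₜ[F] b ∉ tmulSpan F N T := by
  have hle : tmulSpan F N T ≤ LinearMap.ker (N.mkQ.rTensor B) := by
    refine Submodule.span_le.mpr ?_
    rintro _ ⟨x, hx, y, -, rfl⟩
    simp [(Submodule.Quotient.mk_eq_zero N).mpr hx]
  intro h
  have h' : (Submodule.Quotient.mk a : A ⧸ N) ⊗ₜ[F] b = 0 := by simpa using hle h
  exact TensorProduct.tmul_ne_zero ((Submodule.Quotient.mk_eq_zero N).not.mpr ha) hb h'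

theorem tmulSpan_eq_bot_of_forall_eq_zero_left {S : Set A} (hS : ∀ x ∈ S, x = 0) (T : Set B) :
    tmulSpan F S T = ⊥ := by
  refine Submodule.span_eq_bot.mpr ?_
  rintro _ ⟨x, hx, y, -, rfl⟩
  rw [hS x hx, zero_tmul]

theorem tmulSpan_eq_bot_of_forall_eq_zero_right (S : Set A) {T : Set B} (hT : ∀ y ∈ T, y = 0) :
    tmulSpan F S T = ⊥ := by
  refine Submodule.span_eq_bot.mpr ?_
  rintro _ ⟨x, -, y, hy, rfl⟩
  rw [hT y hy, tmul_zero]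

theorem map_tmulSpan {A' B' : Type*} [Ring A'] [Algebra F A'] [Ring B'] [Algebra F B']
    (f : A →ₐ[F] A') (g : B →ₐ[F] B') (S : Set A) (T : Set B) :
    (tmulSpan F S T).map (Algebra.TensorProduct.map f g).toLinearMap
      = tmulSpan F (f '' S) (g '' T) := by
  rw [tmulSpan, Submodule.map_span, tmulSpan]
  congr 1
  ext t
  constructor
  · rintro ⟨_, ⟨x, hx, y, hy, rfl⟩, rfl⟩
    exact ⟨f x, ⟨x, hx, rfl⟩, g y, ⟨y, hy, rfl⟩, by simp⟩
  · rintro ⟨_, ⟨x, hx, rfl⟩, _, ⟨y, hy, rfl⟩, rfl⟩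
    exact ⟨x ⊗ₜ y, ⟨x, hx, y, hy, rfl⟩, by simp⟩

namespace TwoSidedIdeal

variable (I : TwoSidedIdeal A) (J : TwoSidedIdeal B)

theorem mul_mem_tmulSpan_left {z w : A ⊗[F] B} (hw : w ∈ tmulSpan F I J) :
    z * w ∈ tmulSpan F I J := by
  induction hw using Submodule.span_induction with
  | mem _ hg =>
    obtain ⟨x, hx, y, hy, rfl⟩ := hg
    induction z using TensorProduct.induction_on with
    | zero => simp
    | tmul a b =>
      rw [Algebra.TensorProduct.tmul_mul_tmul]
      exact Submodule.subset_span
        ⟨a * x, I.mul_mem_left a x hx, b * y, J.mul_mem_left b y hy, rfl⟩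
    | add u v hu hv => rw [add_mul]; exact Submodule.add_mem _ hu hv
  | zero => simp
  | add u v _ _ hu hv => rw [mul_add]; exact Submodule.add_mem _ hu hv
  | smul c u _ hu => rw [mul_smul_comm]; exact Submodule.smul_mem _ c hu

theorem mul_mem_tmulSpan_right {w z : A ⊗[F] B} (hw : w ∈ tmulSpan F I J) :
    w * z ∈ tmulSpan F I J := by
  induction hw using Submodule.span_induction with
  | mem _ hg =>
    obtain ⟨x, hx, y, hy, rfl⟩ := hg
    induction z using TensorProduct.induction_on with
    | zero => simp
    | tmul a b =>
      rw [Algebra.TensorProduct.tmul_mul_tmul]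
      exact Submodule.subset_span
        ⟨x * a, I.mul_mem_right x a hx, y * b, J.mul_mem_right y b hy, rfl⟩
    | add u v hu hv => rw [mul_add]; exact Submodule.add_mem _ hu hv
  | zero => simp
  | add u v _ _ hu hv => rw [add_mul]; exact Submodule.add_mem _ hu hv
  | smul c u _ hu => rw [smul_mul_assoc]; exact Submodule.smul_mem _ c hu

variable (F) in
def tensorProduct : TwoSidedIdeal (A ⊗[F] B) :=
  .mk' (tmulSpan F (I : Set A) (J : Set B)) (Submodule.zero_mem _) (Submodule.add_mem _)
    (Submodule.neg_mem _) (mul_mem_tmulSpan_left I J) (mul_mem_tmulSpan_right I J)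

theorem coe_tensorProduct :
    (I.tensorProduct F J : Set (A ⊗[F] B)) = tmulSpan F (I : Set A) (J : Set B) :=
  coe_mk' _ _ _ _ _ _

theorem mem_tensorProduct {z : A ⊗[F] B} :
    z ∈ I.tensorProduct F J ↔ z ∈ tmulSpan F (I : Set A) (J : Set B) :=
  mem_mk' _ _ _ _ _ _ _

theorem tmul_mem_tensorProduct {x : A} {y : B} (hx : x ∈ I) (hy : y ∈ J) :
    x ⊗ₜ[F] y ∈ I.tensorProduct F J :=
  (mem_tensorProduct I J).mpr (Submodule.subset_span ⟨x, hx, y, hy, rfl⟩)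

variable {I J}

theorem tensorProduct_ne_bot (hI : I ≠ ⊥) (hJ : J ≠ ⊥) : I.tensorProduct F J ≠ ⊥ := by
  obtain ⟨x, hx, hx₀⟩ := exists_mem_ne_zero_of_ne_bot hI
  obtain ⟨y, hy, hy₀⟩ := exists_mem_ne_zero_of_ne_bot hJ
  intro h
  have := h ▸ tmul_mem_tensorProduct (F := F) I J hx hy
  exact TensorProduct.tmul_ne_zero hx₀ hy₀ ((mem_bot _).mp this)

theorem tensorProduct_ne_top_right [Nontrivial A] (hJ : J ≠ ⊤) : I.tensorProduct F J ≠ ⊤ := by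
  intro h
  have h₁ : (1 : A ⊗[F] B) ∈ I.tensorProduct F J := h ▸ mem_top _
  exact tmul_notMem_tmulSpan_right (N := J.asIdeal.restrictScalars F) _ one_ne_zero
    (fun h1 => hJ (J.eq_top h1)) ((mem_tensorProduct I J).mp h₁)

theorem tensorProduct_ne_top_left [Nontrivial B] (hI : I ≠ ⊤) : I.tensorProduct F J ≠ ⊤ := by
  intro h
  have h₁ : (1 : A ⊗[F] B) ∈ I.tensorProduct F J := h ▸ mem_top _
  exact tmul_notMem_tmulSpan_left (N := I.asIdeal.restrictScalars F) _
    (fun h1 => hI (I.eq_top h1)) one_ne_zero ((mem_tensorProduct I J).mp h₁)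

theorem exists_mul_ne_zero_tensorProduct (hI : ∃ x ∈ I, ∃ x' ∈ I, x * x' ≠ 0)
    (hJ : ∃ y ∈ J, ∃ y' ∈ J, y * y' ≠ 0) :
    ∃ z ∈ I.tensorProduct F J, ∃ z' ∈ I.tensorProduct F J, z * z' ≠ 0 := by
  obtain ⟨x, hx, x', hx', hxx'⟩ := hI
  obtain ⟨y, hy, y', hy', hyy'⟩ := hJ
  refine ⟨x ⊗ₜ y, tmul_mem_tensorProduct I J hx hy, x' ⊗ₜ y',
    tmul_mem_tensorProduct I J hx' hy', ?_⟩
  rw [Algebra.TensorProduct.tmul_mul_tmul]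
  exact TensorProduct.tmul_ne_zero hxx' hyy'

end TwoSidedIdeal

end

theorem TwoSidedIdeal.eq_of_ne_bot_of_ne_top_of_surjective {R S G : Type*} [Ring R] [Ring S]
    [FunLike G R S] [RingHomClass G R S] {q : G} (hq : Function.Surjective q) {K₀ L : Set R}
    {K : TwoSidedIdeal S} (hK₀ : ∀ x ∈ K₀, q x = 0) (hK : (K : Set S) = q '' L)
    (hcases : ∀ J : TwoSidedIdeal R, K₀ ⊆ J → J = ⊤ ∨ (J : Set R) = K₀ ∨ (J : Set R) = L)
    {J : TwoSidedIdeal S} (hJ₀ : J ≠ ⊥) (hJ₁ : J ≠ ⊤) : J = K := by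
  have hJ : (J : Set S) = q '' (J.comap q : Set R) :=
    (Set.image_preimage_eq (J : Set S) hq).symm.trans
      (congrArg _ (Set.ext fun _ => (mem_comap q).symm))
  have hle : K₀ ⊆ J.comap q := fun x hx => (mem_comap q).mpr ((hK₀ x hx).symm ▸ J.zero_mem)
  rcases hcases (J.comap q) hle with h | h | h
  · refine absurd (J.eq_top ?_) hJ₁
    simpa using (mem_comap q).mp (h ▸ mem_top _ : (1 : R) ∈ J.comap q)
  · refine absurd (eq_bot_iff.mpr fun y hy => ?_) hJ₀
    rw [← SetLike.mem_coe, hJ, h] at hy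
    obtain ⟨x, hx, rfl⟩ := hy
    exact (mem_bot _).mpr (hK₀ x hx)
  · exact SetLike.coe_injective (hJ.trans (h ▸ hK.symm))

section

variable {F A B : Type*} [Field F] [Ring A] [Algebra F A] [Ring B] [Algebra F B]
  {IA : TwoSidedIdeal A} {IB : TwoSidedIdeal B}

open Set TwoSidedIdeal

theorem Admissible.eq_top_or_of_ideal_tmul_univ_subset (hIA : IA ≠ ⊥) (hIB : IB ≠ ⊤)
    {J : TwoSidedIdeal (A ⊗[F] B)} (hJ : Admissible F IA IB J)
    (hle : ↑(tmulSpan F (IA : Set A) (univ : Set B)) ⊆ (J : Set (A ⊗[F] B))) :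
    J = ⊤ ∨ (J : Set (A ⊗[F] B)) = ↑(tmulSpan F (IA : Set A) (univ : Set B)) ∨
      (J : Set (A ⊗[F] B)) = ↑(tmulSpan F (IA : Set A) univ ⊔ tmulSpan F univ (IB : Set B)) := by
  obtain ⟨x, hx, hx₀⟩ := exists_mem_ne_zero_of_ne_bot hIA
  have hmem : x ⊗ₜ[F] (1 : B) ∈ (J : Set _) :=
    hle (Submodule.subset_span ⟨x, hx, 1, trivial, rfl⟩)
  have hnotMem (S : Set A) : x ⊗ₜ[F] (1 : B) ∉ tmulSpan F S (IB : Set B) :=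
    tmul_notMem_tmulSpan_right (N := IB.asIdeal.restrictScalars F) S hx₀
      (fun h1 => hIB (IB.eq_top h1))
  rcases hJ with h | h | h | h | h | h
  · rw [h, coe_bot, mem_singleton_iff] at hmem
    exact absurd (hmem ▸ zero_mem _) (hnotMem ∅)
  · exact Or.inl h
  · exact absurd (h ▸ hmem) (hnotMem _)
  · exact Or.inr (Or.inl h)
  · exact absurd (h ▸ hmem) (hnotMem _)
  · exact Or.inr (Or.inr h)

theorem Admissible.eq_top_or_of_univ_tmul_ideal_subset (hIA : IA ≠ ⊤) (hIB : IB ≠ ⊥)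
    {J : TwoSidedIdeal (A ⊗[F] B)} (hJ : Admissible F IA IB J)
    (hle : ↑(tmulSpan F (univ : Set A) (IB : Set B)) ⊆ (J : Set (A ⊗[F] B))) :
    J = ⊤ ∨ (J : Set (A ⊗[F] B)) = ↑(tmulSpan F (univ : Set A) (IB : Set B)) ∨
      (J : Set (A ⊗[F] B)) = ↑(tmulSpan F (IA : Set A) univ ⊔ tmulSpan F univ (IB : Set B)) := by
  obtain ⟨y, hy, hy₀⟩ := exists_mem_ne_zero_of_ne_bot hIB
  have hmem : (1 : A) ⊗ₜ[F] y ∈ (J : Set _) :=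
    hle (Submodule.subset_span ⟨1, trivial, y, hy, rfl⟩)
  have hnotMem (T : Set B) : (1 : A) ⊗ₜ[F] y ∉ tmulSpan F (IA : Set A) T :=
    tmul_notMem_tmulSpan_left (N := IA.asIdeal.restrictScalars F) T
      (fun h1 => hIA (IA.eq_top h1)) hy₀
  rcases hJ with h | h | h | h | h | h
  · rw [h, coe_bot, mem_singleton_iff] at hmem
    exact absurd (hmem ▸ zero_mem _) (hnotMem ∅)
  · exact Or.inl h
  · exact absurd (h ▸ hmem) (hnotMem _)
  · exact absurd (h ▸ hmem) (hnotMem _)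
  · exact Or.inr (Or.inl h)
  · exact Or.inr (Or.inr h)

theorem isNearlySimpleWith_top_tensorProduct_of_surjective {A' : Type*} [Ring A'] [Algebra F A']
    [Nontrivial A'] (hIA : IA ≠ ⊥) (hB : IsNearlySimpleWith IB)
    (hadm : ∀ J : TwoSidedIdeal (A ⊗[F] B), Admissible F IA IB J)
    (q : A →ₐ[F] A') (hq : Function.Surjective q) (hqI : ∀ x ∈ IA, q x = 0) :
    IsNearlySimpleWith ((⊤ : TwoSidedIdeal A').tensorProduct F IB) := by
  obtain ⟨hIB₀, hIB₁, -, hIB₂⟩ := hB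
  set Q := Algebra.TensorProduct.map q (AlgHom.id F B)
  have hker : (tmulSpan F (IA : Set A) (univ : Set B)).map Q.toLinearMap = ⊥ := by
    rw [map_tmulSpan]
    exact tmulSpan_eq_bot_of_forall_eq_zero_left (by rintro _ ⟨x, hx, rfl⟩; exact hqI x hx) _
  have himage : (tmulSpan F (univ : Set A) (IB : Set B)).map Q.toLinearMap
      = tmulSpan F (univ : Set A') (IB : Set B) := by
    rw [map_tmulSpan, image_univ, hq.range_eq, AlgHom.coe_id, image_id]
  have hQ : Function.Surjective Q :=
    Algebra.TensorProduct.map_surjective q (AlgHom.id F B) hq Function.surjective_id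
  refine ⟨tensorProduct_ne_bot top_ne_bot hIB₀, tensorProduct_ne_top_right hIB₁,
    fun J hJ₀ hJ₁ => ?_, exists_mul_ne_zero_tensorProduct ⟨1, trivial, 1, trivial, by simp⟩ hIB₂⟩
  refine eq_of_ne_bot_of_ne_top_of_surjective hQ
    (fun x hx => LinearMap.le_ker_iff_map.mpr hker hx) ?_
    (fun J hJ => (hadm J).eq_top_or_of_ideal_tmul_univ_subset hIA hIB₁ hJ) hJ₀ hJ₁
  rw [coe_tensorProduct, coe_top, ← himage, ← bot_sup_eq (Submodule.map _ _), ← hker,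
    ← Submodule.map_sup]
  exact Submodule.map_coe _ _

theorem isNearlySimpleWith_tensorProduct_top_of_surjective {B' : Type*} [Ring B'] [Algebra F B']
    [Nontrivial B'] (hA : IsNearlySimpleWith IA) (hIB : IB ≠ ⊥)
    (hadm : ∀ J : TwoSidedIdeal (A ⊗[F] B), Admissible F IA IB J)
    (q : B →ₐ[F] B') (hq : Function.Surjective q) (hqI : ∀ y ∈ IB, q y = 0) :
    IsNearlySimpleWith (IA.tensorProduct F (⊤ : TwoSidedIdeal B')) := by
  obtain ⟨hIA₀, hIA₁, -, hIA₂⟩ := hA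
  set Q := Algebra.TensorProduct.map (AlgHom.id F A) q
  have hker : (tmulSpan F (univ : Set A) (IB : Set B)).map Q.toLinearMap = ⊥ := by
    rw [map_tmulSpan]
    exact tmulSpan_eq_bot_of_forall_eq_zero_right _ (by rintro _ ⟨y, hy, rfl⟩; exact hqI y hy)
  have himage : (tmulSpan F (IA : Set A) (univ : Set B)).map Q.toLinearMap
      = tmulSpan F (IA : Set A) (univ : Set B') := by
    rw [map_tmulSpan, image_univ, hq.range_eq, AlgHom.coe_id, image_id]
  have hQ : Function.Surjective Q :=
    Algebra.TensorProduct.map_surjective (AlgHom.id F A) q Function.surjective_id hq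
  refine ⟨tensorProduct_ne_bot hIA₀ top_ne_bot, tensorProduct_ne_top_left hIA₁,
    fun J hJ₀ hJ₁ => ?_, exists_mul_ne_zero_tensorProduct hIA₂ ⟨1, trivial, 1, trivial, by simp⟩⟩
  refine eq_of_ne_bot_of_ne_top_of_surjective hQ
    (fun x hx => LinearMap.le_ker_iff_map.mpr hker hx) ?_
    (fun J hJ => (hadm J).eq_top_or_of_univ_tmul_ideal_subset hIA₁ hIB hJ) hJ₀ hJ₁
  rw [coe_tensorProduct, coe_top, ← himage, ← sup_bot_eq (Submodule.map _ _), ← hker,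
    ← Submodule.map_sup]
  exact Submodule.map_coe _ _

end

/-- `A'` and `B'` stand for `A/I_A` and `B/I_B`. -/
theorem quotient_tensor_nearly_simple_of_all_ideals_admissible
    (F A B A' B' : Type*) [Field F] [Ring A] [Algebra F A] [Ring B] [Algebra F B]
    [Ring A'] [Algebra F A'] [Ring B'] [Algebra F B']
    (IA : TwoSidedIdeal A) (IB : TwoSidedIdeal B)
    (hA : IsNearlySimpleWith IA) (hB : IsNearlySimpleWith IB)
    (hadm : ∀ J : TwoSidedIdeal (A ⊗[F] B), Admissible F IA IB J)
    (qA : A →ₐ[F] A') (hqAsurj : Function.Surjective qA)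
    (hkerA : ∀ x : A, qA x = 0 ↔ x ∈ IA)
    (qB : B →ₐ[F] B') (hqBsurj : Function.Surjective qB)
    (hkerB : ∀ y : B, qB y = 0 ↔ y ∈ IB) :
    (∃ K : TwoSidedIdeal (A' ⊗[F] B),
      (K : Set (A' ⊗[F] B)) = ↑(tmulSpan F (Set.univ : Set A') (IB : Set B)) ∧
      K ≠ ⊥ ∧ K ≠ ⊤ ∧
      (∀ J : TwoSidedIdeal (A' ⊗[F] B), J ≠ ⊥ → J ≠ ⊤ → J = K) ∧
      (∃ x ∈ K, ∃ y ∈ K, x * y ≠ 0)) ∧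
    (∃ K : TwoSidedIdeal (A ⊗[F] B'),
      (K : Set (A ⊗[F] B')) = ↑(tmulSpan F (IA : Set A) (Set.univ : Set B')) ∧
      K ≠ ⊥ ∧ K ≠ ⊤ ∧
      (∀ J : TwoSidedIdeal (A ⊗[F] B'), J ≠ ⊥ → J ≠ ⊤ → J = K) ∧
      (∃ x ∈ K, ∃ y ∈ K, x * y ≠ 0)) := by
  have : Nontrivial A' := nontrivial_of_ne (qA 1) 0 fun h => hA.2.1 (IA.eq_top ((hkerA 1).mp h))
  have : Nontrivial B' := nontrivial_of_ne (qB 1) 0 fun h => hB.2.1 (IB.eq_top ((hkerB 1).mp h))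
  refine ⟨⟨_, ?_, isNearlySimpleWith_top_tensorProduct_of_surjective hA.1 hB hadm qA hqAsurj
      fun x => (hkerA x).mpr⟩,
    ⟨_, ?_, isNearlySimpleWith_tensorProduct_top_of_surjective hA hB.1 hadm qB hqBsurj
      fun y => (hkerB y).mpr⟩⟩ <;>
  rw [TwoSidedIdeal.coe_tensorProduct, TwoSidedIdeal.coe_top]
end

section
/- Let A and B be unital simple algebras over a field F. Then the F-algebra A ⊗ B is simple (its only two-sided ideals are {0} and A ⊗ B) if and only if Z(A) ⊗ Z(B) is a field, where Z(A) and Z(B) denote the centers of A and B. -/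
/-!
Over a field, the centralizer of `A ⊗ 1` in `A ⊗ B` is `Z(A) ⊗ B`, and symmetrically; hence the
center of `A ⊗ B` is `Z(A) ⊗ Z(B)`, which is a field as soon as `A ⊗ B` is simple.

Conversely, let `A` be simple and `J` a nonzero ideal of `A ⊗ B`. Expand elements in a basis of
`B` and pick `x ∈ J` nonzero with the fewest nonzero coefficients. Simplicity of `A` lets us
replace `x` by an element `y ∈ J` with no larger support and one coefficient equal to `1`; the
commutator of `y` with any `a ⊗ 1` lies in `J`, has that coefficient zero, hence vanishes by
minimality. So `J` meets `Z(A) ⊗ B` nontrivially, and `A ⊗ B` is simple whenever `Z(A) ⊗ B` is.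
Applying this twice reduces simplicity of `A ⊗ B` to that of the field `Z(B) ⊗ Z(A)`.
-/

open Finset TensorProduct Algebra.TensorProduct Subalgebra

namespace Algebra.TensorProduct

variable {F A B : Type*} [Field F] [Ring A] [Algebra F A] [Ring B] [Algebra F B]

theorem map_injective_of_field {C D : Type*} [Ring C] [Algebra F C]
    [Ring D] [Algebra F D] (f : C →ₐ[F] A) (g : D →ₐ[F] B) (hf : Function.Injective f)
    (hg : Function.Injective g) : Function.Injective (map f g) :=
  TensorProduct.map_injective_of_flat_flat f.toLinearMap g.toLinearMap hf hg

theorem center_eq_range_map_center :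
    center F (A ⊗[F] B) = (map (center F A).val (center F B).val).range := by
  refine le_antisymm (fun x hx => ?_) ?_
  · obtain ⟨y, rfl⟩ : x ∈ (map (center F A).val (AlgHom.id F B)).range := by
      rw [← centralizer_coe_range_includeLeft_eq_center_tensorProduct]
      exact center_le_centralizer _ _ hx
    have hinj : Function.Injective (map (center F A).val (AlgHom.id F B)) :=
      map_injective_of_field _ _ Subtype.val_injective Function.injective_id
    obtain ⟨z, rfl⟩ : y ∈ (map (AlgHom.id F (center F A)) (center F B).val).range := by
      rw [← centralizer_range_includeRight_eq_center_tensorProduct]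
      rintro _ ⟨b, rfl⟩
      apply hinj
      simpa using Subalgebra.mem_center_iff.mp hx (1 ⊗ₜ b)
    have hcomp := map_comp (center F A).val (AlgHom.id F _) (AlgHom.id F B) (center F B).val
    rw [AlgHom.comp_id, AlgHom.id_comp] at hcomp
    exact ⟨z, AlgHom.congr_fun hcomp z⟩
  · rw [map_range, AlgHom.range_comp, AlgHom.range_comp, Subalgebra.range_val,
      Subalgebra.range_val]
    exact sup_le (includeLeft_map_center_le F A B) (includeRight_map_center_le F A B)

theorem isField_center_tensorProduct_center [IsSimpleRing (A ⊗[F] B)] :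
    IsField (center F A ⊗[F] center F B) :=
  let e := (AlgEquiv.ofInjective _ (map_injective_of_field (center F A).val (center F B).val
    Subtype.val_injective Subtype.val_injective)).trans
    (equivOfEq _ _ center_eq_range_map_center.symm)
  e.toMulEquiv.isField (IsSimpleRing.isField_center (A ⊗[F] B))

section Coefficients

variable {ι : Type*} (β : Module.Basis ι F B)

theorem basis_repr_tmul_one_mul (a : A) (x : A ⊗[F] B) :
    (basis A β).repr ((a ⊗ₜ 1) * x) = a • (basis A β).repr x := by
  rw [← map_smul]
  congr 1
  induction x using TensorProduct.induction_on with
  | zero => simp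
  | tmul a' b => simp [smul_tmul']
  | add x y hx hy => rw [mul_add, smul_add, hx, hy]

theorem basis_repr_mul_tmul_one (a : A) (x : A ⊗[F] B) :
    (basis A β).repr (x * (a ⊗ₜ 1)) =
      ((basis A β).repr x).mapRange (· * a) (zero_mul a) := by
  induction x using TensorProduct.induction_on with
  | zero => simp
  | tmul a' b => ext i; simp [mul_assoc, Algebra.commutes]
  | add x y hx hy =>
    rw [add_mul, map_add, hx, hy, map_add, Finsupp.mapRange_add (add_mul · · a)]

def coeffIdeal (J : TwoSidedIdeal (A ⊗[F] B)) (s : Finset ι) (i : ι) : TwoSidedIdeal A :=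
  .mk' {a | ∃ y ∈ J, ((basis A β).repr y).support ⊆ s ∧ (basis A β).repr y i = a}
    ⟨0, J.zero_mem, by simp⟩
    (by
      classical
      rintro _ _ ⟨y, hy, hys, rfl⟩ ⟨z, hz, hzs, rfl⟩
      refine ⟨y + z, J.add_mem hy hz, ?_, by simp⟩
      rw [map_add]
      exact Finsupp.support_add.trans (Finset.union_subset hys hzs))
    (by
      rintro _ ⟨y, hy, hys, rfl⟩
      exact ⟨-y, J.neg_mem hy, by simpa using hys, by simp⟩)
    (by
      rintro a _ ⟨y, hy, hys, rfl⟩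
      refine ⟨(a ⊗ₜ 1) * y, J.mul_mem_left _ _ hy, ?_, by simp [basis_repr_tmul_one_mul]⟩
      rw [basis_repr_tmul_one_mul]
      exact Finsupp.support_smul.trans hys)
    (by
      rintro _ a ⟨y, hy, hys, rfl⟩
      refine ⟨y * (a ⊗ₜ 1), J.mul_mem_right _ _ hy, ?_, by simp [basis_repr_mul_tmul_one]⟩
      rw [basis_repr_mul_tmul_one]
      exact Finsupp.support_mapRange.trans hys)

theorem mem_coeffIdeal {J : TwoSidedIdeal (A ⊗[F] B)} {s : Finset ι} {i : ι} {a : A} :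
    a ∈ coeffIdeal β J s i ↔
      ∃ y ∈ J, ((basis A β).repr y).support ⊆ s ∧ (basis A β).repr y i = a :=
  TwoSidedIdeal.mem_mk' ..

theorem exists_mem_support_subset_basis_repr_eq_one [IsSimpleRing A]
    {J : TwoSidedIdeal (A ⊗[F] B)} {x : A ⊗[F] B} (hx : x ∈ J) {i : ι}
    (hi : i ∈ ((basis A β).repr x).support) :
    ∃ y ∈ J, ((basis A β).repr y).support ⊆ ((basis A β).repr x).support ∧
      (basis A β).repr y i = 1 :=
  (mem_coeffIdeal β).mp <| IsSimpleRing.one_mem_of_ne_zero_mem _ (Finsupp.mem_support_iff.mp hi)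
    ((mem_coeffIdeal β).mpr ⟨x, hx, subset_rfl, rfl⟩)

theorem eq_zero_of_basis_repr_eq_zero_of_support_subset [DecidableEq ι]
    {J : TwoSidedIdeal (A ⊗[F] B)} {x y : A ⊗[F] B}
    (hmin : ∀ z ∈ J, z ≠ 0 → #((basis A β).repr x).support ≤ #((basis A β).repr z).support)
    (hy : y ∈ J) (hyx : ((basis A β).repr y).support ⊆ ((basis A β).repr x).support) {i : ι}
    (hi : i ∈ ((basis A β).repr x).support) (hyi : (basis A β).repr y i = 0) : y = 0 := by
  by_contra hy0
  have hlt : ((basis A β).repr y).support ⊂ ((basis A β).repr x).support :=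
    Finset.ssubset_iff_subset_ne.mpr ⟨hyx, fun h => Finsupp.mem_support_iff.mp (h ▸ hi) hyi⟩
  exact (hmin y hy hy0).not_gt (Finset.card_lt_card hlt)

end Coefficients

theorem exists_ne_zero_forall_commute_tmul_one [IsSimpleRing A] {J : TwoSidedIdeal (A ⊗[F] B)}
    (hJ : J ≠ ⊥) : ∃ y ∈ J, y ≠ 0 ∧ ∀ a : A, Commute (a ⊗ₜ[F] 1) y := by
  classical
  let β := Module.Free.chooseBasis F B
  obtain ⟨x₀, hx₀⟩ : ∃ x, x ∈ J ∧ x ≠ 0 := by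
    by_contra! h
    exact hJ (eq_bot_iff.mpr fun x hx => (TwoSidedIdeal.mem_bot _).mpr (h x hx))
  obtain ⟨x, ⟨hxJ, hx0⟩, hmin⟩ :=
    (measure fun x => #((basis A β).repr x).support).wf.has_min {x | x ∈ J ∧ x ≠ 0} ⟨x₀, hx₀⟩
  obtain ⟨i, hi⟩ : ((basis A β).repr x).support.Nonempty := by simpa using hx0
  obtain ⟨y, hyJ, hyx, hyi⟩ := exists_mem_support_subset_basis_repr_eq_one β hxJ hi
  refine ⟨y, hyJ, by rintro rfl; simp at hyi, fun a => sub_eq_zero.mp ?_⟩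
  refine eq_zero_of_basis_repr_eq_zero_of_support_subset β
    (fun z hz hz0 => not_lt.mp (hmin z ⟨hz, hz0⟩))
    (J.sub_mem (J.mul_mem_left _ _ hyJ) (J.mul_mem_right _ _ hyJ)) ?_ hi
    (by simp [basis_repr_tmul_one_mul, basis_repr_mul_tmul_one, hyi])
  rw [map_sub, basis_repr_tmul_one_mul, basis_repr_mul_tmul_one]
  exact Finsupp.support_sub.trans
    (Finset.union_subset (Finsupp.support_smul.trans hyx) (Finsupp.support_mapRange.trans hyx))

theorem comap_map_center_val_ne_bot [IsSimpleRing A] {J : TwoSidedIdeal (A ⊗[F] B)}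
    (hJ : J ≠ ⊥) : J.comap (map (center F A).val (AlgHom.id F B)) ≠ ⊥ := by
  obtain ⟨y, hyJ, hy0, hy⟩ := exists_ne_zero_forall_commute_tmul_one hJ
  obtain ⟨z, rfl⟩ : y ∈ (map (center F A).val (AlgHom.id F B)).range := by
    rw [← centralizer_coe_range_includeLeft_eq_center_tensorProduct]
    rintro _ ⟨a, rfl⟩
    exact (hy a).eq
  intro h
  have hz : z ∈ J.comap (map (center F A).val (AlgHom.id F B)) := hyJ
  rw [h, TwoSidedIdeal.mem_bot] at hz
  exact hy0 (by rw [hz, map_zero])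

theorem isSimpleRing_of_isSimpleRing_center_tensorProduct [IsSimpleRing A]
    [IsSimpleRing (center F A ⊗[F] B)] : IsSimpleRing (A ⊗[F] B) :=
  have : Nontrivial (A ⊗[F] B) :=
    (map_injective_of_field (center F A).val (AlgHom.id F B)
      Subtype.val_injective Function.injective_id).nontrivial
  .of_eq_bot_or_eq_top fun J => or_iff_not_imp_left.mpr fun hJ => by
    have hone := IsSimpleRing.one_mem_of_ne_bot _ (comap_map_center_val_ne_bot hJ)
    rwa [TwoSidedIdeal.mem_comap, map_one, TwoSidedIdeal.one_mem_iff] at hone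

end Algebra.TensorProduct

/-- Let `A` and `B` be unital simple algebras over a field `F`. Then `A ⊗[F] B` is
simple if and only if `Z(A) ⊗[F] Z(B)` is a field. -/
theorem tensor_product_of_simple_algebras_simple_iff_center_tensor_isField
    (F A B : Type*) [Field F] [Ring A] [Algebra F A] [Ring B] [Algebra F B]
    [Nontrivial A] [Nontrivial B]
    (hAsimple : ∀ I : TwoSidedIdeal A, I = ⊥ ∨ I = ⊤)
    (hBsimple : ∀ I : TwoSidedIdeal B, I = ⊥ ∨ I = ⊤) :
    (∀ J : TwoSidedIdeal (A ⊗[F] B), J = ⊥ ∨ J = ⊤) ↔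
      IsField ((Subalgebra.center F A) ⊗[F] (Subalgebra.center F B)) := by
  have : IsSimpleRing A := .of_eq_bot_or_eq_top hAsimple
  have : IsSimpleRing B := .of_eq_bot_or_eq_top hBsimple
  refine ⟨fun h => ?_, fun h => ?_⟩
  · have : Nontrivial (A ⊗[F] B) :=
      nontrivial_of_algebraMap_injective_of_flat_left F A B (FaithfulSMul.algebraMap_injective F B)
    have : IsSimpleRing (A ⊗[F] B) := .of_eq_bot_or_eq_top h
    exact isField_center_tensorProduct_center
  · have : IsSimpleRing (center F B ⊗[F] center F A) := (isSimpleRing_iff_isField _).mpr <|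
      (Algebra.TensorProduct.comm F _ _).toMulEquiv.isField h
    have : IsSimpleRing (B ⊗[F] center F A) := isSimpleRing_of_isSimpleRing_center_tensorProduct
    have : IsSimpleRing (center F A ⊗[F] B) :=
      .of_ringEquiv (Algebra.TensorProduct.comm F _ _).toRingEquiv inferInstance
    have : IsSimpleRing (A ⊗[F] B) := isSimpleRing_of_isSimpleRing_center_tensorProduct
    exact IsSimpleOrder.eq_bot_or_eq_top
end

section
/- Let A and B be unital prime algebras over a field F such that A contains a smallest nonzero two-sided ideal I (i.e., I ≠ {0} and I is contained in every nonzero two-sided ideal of A) and B contains a smallest nonzero two-sided ideal J. If every nonzero two-sided ideal of A ⊗ B contains a nonzero elementary tensor a ⊗ b, then I ⊗ J (the span of {x ⊗ y : x ∈ I, y ∈ J}) is the smallest nonzero two-sided ideal of A ⊗ B. -/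
open TensorProduct

/-- A nonzero elementary tensor over a field has nonzero factors, and conversely. -/
lemma tmul_ne_zero_of_ne_zero {F A B : Type*} [Field F] [AddCommGroup A] [Module F A]
    [AddCommGroup B] [Module F B] {x : A} {y : B} (hx : x ≠ 0) (hy : y ≠ 0) :
    x ⊗ₜ[F] y ≠ 0 := by
  obtain ⟨f, hf⟩ : ∃ φ : Module.Dual F A, φ x ≠ 0 := by
    by_contra h
    push_neg at h
    exact hx ((Module.forall_dual_apply_eq_zero_iff F x).1 h)
  obtain ⟨g, hg⟩ : ∃ φ : Module.Dual F B, φ y ≠ 0 := by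
    by_contra h
    push_neg at h
    exact hy ((Module.forall_dual_apply_eq_zero_iff F y).1 h)
  intro h
  have := congrArg (fun t => TensorProduct.lid F F (TensorProduct.map f g t)) h
  simp only [TensorProduct.map_tmul, map_zero,
    TensorProduct.lid_tmul, smul_eq_mul] at this
  exact mul_ne_zero hf hg this

/-- Let `A`, `B` be unital prime `F`-algebras with smallest nonzero two-sided ideals `I`
and `J` respectively. If every nonzero two-sided ideal of `A ⊗[F] B` contains a nonzero
elementary tensor, then `I ⊗ J` (the span of elementary tensors `x ⊗ y`, `x ∈ I`,
`y ∈ J`) is the smallest nonzero two-sided ideal of `A ⊗[F] B`. -/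
theorem smallest_ideal_of_tensor_product
    (F A B : Type*) [Field F] [Ring A] [Algebra F A] [Ring B] [Algebra F B]
    (hAprime : ∀ a b : A, (∀ x : A, a * x * b = 0) → a = 0 ∨ b = 0)
    (hBprime : ∀ a b : B, (∀ x : B, a * x * b = 0) → a = 0 ∨ b = 0)
    (I : TwoSidedIdeal A) (hI : I ≠ ⊥) (hImin : ∀ I' : TwoSidedIdeal A, I' ≠ ⊥ → I ≤ I')
    (J : TwoSidedIdeal B) (hJ : J ≠ ⊥) (hJmin : ∀ J' : TwoSidedIdeal B, J' ≠ ⊥ → J ≤ J')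
    (helem : ∀ K : TwoSidedIdeal (A ⊗[F] B), K ≠ ⊥ →
      ∃ (a : A) (b : B), a ⊗ₜ[F] b ∈ K ∧ a ⊗ₜ[F] b ≠ 0) :
    ∃ K₀ : TwoSidedIdeal (A ⊗[F] B),
      (K₀ : Set (A ⊗[F] B)) =
        ↑(Submodule.span F {t : A ⊗[F] B | ∃ x ∈ I, ∃ y ∈ J, t = x ⊗ₜ[F] y}) ∧
      K₀ ≠ ⊥ ∧
      ∀ K : TwoSidedIdeal (A ⊗[F] B), K ≠ ⊥ → K₀ ≤ K := by
  set S : Set (A ⊗[F] B) := {t : A ⊗[F] B | ∃ x ∈ I, ∃ y ∈ J, t = x ⊗ₜ[F] y} with hS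
  set M : Submodule F (A ⊗[F] B) := Submodule.span F S with hM
  -- closure of the span under left multiplication
  have mul_left_mem : ∀ (r t : A ⊗[F] B), t ∈ M → r * t ∈ M := by
    intro r t ht
    induction ht using Submodule.span_induction with
    | mem u hu =>
      obtain ⟨x, hx, y, hy, rfl⟩ := hu
      induction r using TensorProduct.induction_on with
      | zero => simpa using M.zero_mem
      | tmul u v =>
        rw [Algebra.TensorProduct.tmul_mul_tmul]
        exact Submodule.subset_span ⟨u * x, I.mul_mem_left _ _ hx, v * y,
          J.mul_mem_left _ _ hy, rfl⟩
      | add r₁ r₂ h₁ h₂ =>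
        rw [add_mul]; exact M.add_mem h₁ h₂
    | zero => simpa using M.zero_mem
    | add u v hu hv h₁ h₂ => rw [mul_add]; exact M.add_mem h₁ h₂
    | smul c u hu h₁ => rw [mul_smul_comm]; exact M.smul_mem _ h₁
  have mul_right_mem : ∀ (r t : A ⊗[F] B), t ∈ M → t * r ∈ M := by
    intro r t ht
    induction ht using Submodule.span_induction with
    | mem u hu =>
      obtain ⟨x, hx, y, hy, rfl⟩ := hu
      induction r using TensorProduct.induction_on with
      | zero => simpa using M.zero_mem
      | tmul u v =>
        rw [Algebra.TensorProduct.tmul_mul_tmul]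
        exact Submodule.subset_span ⟨x * u, I.mul_mem_right _ _ hx, y * v,
          J.mul_mem_right _ _ hy, rfl⟩
      | add r₁ r₂ h₁ h₂ =>
        rw [mul_add]; exact M.add_mem h₁ h₂
    | zero => simpa using M.zero_mem
    | add u v hu hv h₁ h₂ => rw [add_mul]; exact M.add_mem h₁ h₂
    | smul c u hu h₁ => rw [smul_mul_assoc]; exact M.smul_mem _ h₁
  refine ⟨TwoSidedIdeal.mk' (M : Set (A ⊗[F] B)) M.zero_mem (fun h₁ h₂ => M.add_mem h₁ h₂)
    (fun h₁ => M.neg_mem h₁) (fun {x y} h => mul_left_mem x y h)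
    (fun {x y} h => mul_right_mem y x h), ?_, ?_, ?_⟩
  · ext t
    simp [TwoSidedIdeal.mem_mk']
  · -- nonzero
    obtain ⟨x₀, hx₀I, hx₀⟩ : ∃ x ∈ I, x ≠ 0 := by
      by_contra h
      push_neg at h
      exact hI (by
        refine SetLike.ext fun z => ?_
        simp only [TwoSidedIdeal.mem_bot]
        exact ⟨fun hz => h z hz, fun hz => hz ▸ I.zero_mem⟩)
    obtain ⟨y₀, hy₀J, hy₀⟩ : ∃ y ∈ J, y ≠ 0 := by
      by_contra h
      push_neg at h
      exact hJ (by
        refine SetLike.ext fun z => ?_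
        simp only [TwoSidedIdeal.mem_bot]
        exact ⟨fun hz => h z hz, fun hz => hz ▸ J.zero_mem⟩)
    intro hbot
    have hmem : x₀ ⊗ₜ[F] y₀ ∈ TwoSidedIdeal.mk' (M : Set (A ⊗[F] B)) M.zero_mem
        (fun h₁ h₂ => M.add_mem h₁ h₂) (fun h₁ => M.neg_mem h₁)
        (fun {x y} h => mul_left_mem x y h) (fun {x y} h => mul_right_mem y x h) := by
      rw [TwoSidedIdeal.mem_mk']
      exact Submodule.subset_span ⟨x₀, hx₀I, y₀, hy₀J, rfl⟩
    rw [hbot, TwoSidedIdeal.mem_bot] at hmem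
    exact tmul_ne_zero_of_ne_zero hx₀ hy₀ hmem
  · -- minimality
    intro K hK
    obtain ⟨a, b, habK, hab⟩ := helem K hK
    have ha : a ≠ 0 := by rintro rfl; simp at hab
    have hb : b ≠ 0 := by rintro rfl; simp at hab
    -- the ideal {x : A | x ⊗ b ∈ K} contains I
    have hIb : ∀ x ∈ I, x ⊗ₜ[F] b ∈ K := by
      have hsub : I ≤ TwoSidedIdeal.mk' {x : A | x ⊗ₜ[F] b ∈ K}
          (by simp [K.zero_mem])
          (fun {x y} hx hy => by
            simp only [Set.mem_setOf_eq, TensorProduct.add_tmul] at *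
            exact K.add_mem hx hy)
          (fun {x} hx => by
            simp only [Set.mem_setOf_eq, TensorProduct.neg_tmul] at *
            exact K.neg_mem hx)
          (fun {x y} hy => by
            simp only [Set.mem_setOf_eq] at *
            have : (x * y) ⊗ₜ[F] b = (x ⊗ₜ[F] (1 : B)) * (y ⊗ₜ[F] b) := by
              rw [Algebra.TensorProduct.tmul_mul_tmul, one_mul]
            rw [this]; exact K.mul_mem_left _ _ hy)
          (fun {x y} hx => by
            simp only [Set.mem_setOf_eq] at *
            have : (x * y) ⊗ₜ[F] b = (x ⊗ₜ[F] b) * (y ⊗ₜ[F] (1 : B)) := by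
              rw [Algebra.TensorProduct.tmul_mul_tmul, mul_one]
            rw [this]; exact K.mul_mem_right _ _ hx) := by
        apply hImin
        intro hbot
        have : a ∈ (⊥ : TwoSidedIdeal A) := by
          rw [← hbot, TwoSidedIdeal.mem_mk']
          exact habK
        rw [TwoSidedIdeal.mem_bot] at this
        exact ha this
      intro x hx
      have := hsub hx
      rwa [TwoSidedIdeal.mem_mk'] at this
    -- the ideal {y : B | ∀ x ∈ I, x ⊗ y ∈ K} contains J
    have hIJ : ∀ x ∈ I, ∀ y ∈ J, x ⊗ₜ[F] y ∈ K := by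
      have hsub : J ≤ TwoSidedIdeal.mk' {y : B | ∀ x ∈ I, x ⊗ₜ[F] y ∈ K}
          (by intro x _; simp [K.zero_mem])
          (fun {y z} hy hz x hx => by
            simp only [Set.mem_setOf_eq, TensorProduct.tmul_add] at *
            exact K.add_mem (hy x hx) (hz x hx))
          (fun {y} hy x hx => by
            simp only [Set.mem_setOf_eq, TensorProduct.tmul_neg] at *
            exact K.neg_mem (hy x hx))
          (fun {r y} hy x hx => by
            simp only [Set.mem_setOf_eq] at *
            have : x ⊗ₜ[F] (r * y) = ((1 : A) ⊗ₜ[F] r) * (x ⊗ₜ[F] y) := by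
              rw [Algebra.TensorProduct.tmul_mul_tmul, one_mul]
            rw [this]; exact K.mul_mem_left _ _ (hy x hx))
          (fun {y r} hy x hx => by
            simp only [Set.mem_setOf_eq] at *
            have : x ⊗ₜ[F] (y * r) = (x ⊗ₜ[F] y) * ((1 : A) ⊗ₜ[F] r) := by
              rw [Algebra.TensorProduct.tmul_mul_tmul, mul_one]
            rw [this]; exact K.mul_mem_right _ _ (hy x hx)) := by
        apply hJmin
        intro hbot
        have : b ∈ (⊥ : TwoSidedIdeal B) := by
          rw [← hbot, TwoSidedIdeal.mem_mk']
          exact fun x hx => hIb x hx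
        rw [TwoSidedIdeal.mem_bot] at this
        exact hb this
      intro x hx y hy
      have := hsub hy
      rw [TwoSidedIdeal.mem_mk'] at this
      exact this x hx
    -- conclude: span ≤ K
    intro t ht
    rw [TwoSidedIdeal.mem_mk'] at ht
    have ht' : t ∈ M := ht
    clear ht
    induction ht' using Submodule.span_induction with
    | mem u hu =>
      obtain ⟨x, hx, y, hy, rfl⟩ := hu
      exact hIJ x hx y hy
    | zero => exact K.zero_mem
    | add u v hu hv h₁ h₂ => exact K.add_mem h₁ h₂
    | smul c u hu h₁ =>
      rw [Algebra.smul_def]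
      exact K.mul_mem_left _ _ h₁
end

section
/- Let D be a unital simple algebra over a field F and let δ : D → D be an F-linear map satisfying δ(xy) = δ(x)y + xδ(y) for all x, y ∈ D (a derivation). If δ ≠ 0 and the range of δ is finite-dimensional over F, then D is finite-dimensional over F. -/
/-- Let `D` be a unital simple algebra over a field `F` and `δ : D → D` a nonzero
derivation with finite-dimensional range. Then `D` is finite-dimensional over `F`. -/
theorem finite_dimensional_of_nonzero_finite_rank_derivation
    (F D : Type*) [Field F] [Ring D] [Algebra F D] [Nontrivial D]
    (hsimple : ∀ I : TwoSidedIdeal D, I = ⊥ ∨ I = ⊤)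
    (δ : D →ₗ[F] D) (hder : ∀ x y : D, δ (x * y) = δ x * y + x * δ y)
    (hne : δ ≠ 0) (hfin : FiniteDimensional F (LinearMap.range δ)) :
    FiniteDimensional F D := by
  classical
  -- The set of x such that x * D is contained in a finite-dimensional subspace.
  set S : Set D := {x : D | ∃ U : Submodule F D, FiniteDimensional F U ∧ ∀ d : D, x * d ∈ U}
    with hS
  have zero_mem : (0 : D) ∈ S := ⟨⊥, inferInstance, fun d => by simp⟩
  have add_mem : ∀ {x y : D}, x ∈ S → y ∈ S → x + y ∈ S := by
    rintro x y ⟨U, hU, hx⟩ ⟨V, hV, hy⟩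
    exact ⟨U ⊔ V, inferInstance, fun d => by
      rw [add_mul]
      exact Submodule.add_mem _ (Submodule.mem_sup_left (hx d)) (Submodule.mem_sup_right (hy d))⟩
  have neg_mem : ∀ {x : D}, x ∈ S → -x ∈ S := by
    rintro x ⟨U, hU, hx⟩
    exact ⟨U, hU, fun d => by rw [neg_mul]; exact Submodule.neg_mem _ (hx d)⟩
  have mul_mem_left : ∀ {x y : D}, y ∈ S → x * y ∈ S := by
    rintro x y ⟨U, hU, hy⟩
    refine ⟨Submodule.map (LinearMap.mulLeft F x) U, inferInstance, fun d => ?_⟩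
    rw [mul_assoc]
    exact ⟨y * d, hy d, rfl⟩
  have mul_mem_right : ∀ {x y : D}, x ∈ S → x * y ∈ S := by
    rintro x y ⟨U, hU, hx⟩
    exact ⟨U, hU, fun d => by rw [mul_assoc]; exact hx (y * d)⟩
  set I : TwoSidedIdeal D := TwoSidedIdeal.mk' S zero_mem add_mem neg_mem mul_mem_left
    mul_mem_right with hI
  -- find a with δ a ≠ 0, set c = δ a; then c ∈ S.
  obtain ⟨a, ha⟩ : ∃ a : D, δ a ≠ 0 := by
    by_contra h
    push_neg at h
    exact hne (LinearMap.ext fun x => h x)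
  have hcS : δ a ∈ S := by
    refine ⟨LinearMap.range δ ⊔ Submodule.map (LinearMap.mulLeft F a) (LinearMap.range δ),
      inferInstance, fun d => ?_⟩
    have : δ a * d = δ (a * d) - a * δ d := by rw [hder a d]; abel
    rw [this]
    exact Submodule.sub_mem _ (Submodule.mem_sup_left ⟨a * d, rfl⟩)
      (Submodule.mem_sup_right ⟨δ d, ⟨d, rfl⟩, rfl⟩)
  have hItop : I = ⊤ := by
    rcases hsimple I with h | h
    · exfalso
      apply ha
      have : δ a ∈ I := by rw [hI, TwoSidedIdeal.mem_mk']; exact hcS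
      rw [h, TwoSidedIdeal.mem_bot] at this
      exact this
    · exact h
  have h1 : (1 : D) ∈ S := by
    have : (1 : D) ∈ I := hItop ▸ TwoSidedIdeal.mem_top D
    rwa [hI, TwoSidedIdeal.mem_mk'] at this
  obtain ⟨U, hU, hall⟩ := h1
  have hUtop : U = ⊤ := by
    rw [eq_top_iff]
    intro d _
    simpa using hall d
  rw [hUtop] at hU
  exact (Submodule.topEquiv : (⊤ : Submodule F D) ≃ₗ[F] D).finiteDimensional
end
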